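/- Let μ be a balanced measure on ℝ, N ∈ ℕ, η ∈ (0,1), and let S ⊆ 𝒟 be η-sparse. There is a constant C = C(μ,N,η) such that for every f₁ ∈ L¹(μ) with ‖f₁‖_{L¹(μ)} ≤ 1 and every Borel set G ⊆ ℝ with 0 < μ(G) < ∞, there exists a measurable set G' ⊆ G with μ(G) ≤ 2 μ(G') such that for every measurable f₂ with |f₂| ≤ 1_{G'} one has C_S^N(|f₁|, |f₂|) ≤ C. -/

import Mathlib

open MeasureTheory Set
open scoped ENNReal NNReal

noncomputable section

/-- A dyadic interval `[2^(-k) j, 2^(-k) (j+1))`. -/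
structure DyadicInterval where
  k : ℤ
  j : ℤ
deriving DecidableEq

namespace DyadicInterval

/-- The underlying set of a dyadic interval. -/
def toSet (I : DyadicInterval) : Set ℝ :=
  Set.Ico ((2 : ℝ) ^ (-I.k) * (I.j : ℝ)) ((2 : ℝ) ^ (-I.k) * ((I.j : ℝ) + 1))

/-- Left dyadic child. -/
def left (I : DyadicInterval) : DyadicInterval := ⟨I.k + 1, 2 * I.j⟩

/-- Right dyadic child. -/
def right (I : DyadicInterval) : DyadicInterval := ⟨I.k + 1, 2 * I.j + 1⟩

/-- Dyadic parent. -/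
def parent (I : DyadicInterval) : DyadicInterval := ⟨I.k - 1, Int.fdiv I.j 2⟩

/-- Dyadic sibling (the other child of the parent). -/
def sibling (I : DyadicInterval) : DyadicInterval :=
  if 2 ∣ I.j then ⟨I.k, I.j + 1⟩ else ⟨I.k, I.j - 1⟩

/-- `s`-th dyadic ancestor. -/
def ancestor (I : DyadicInterval) : ℕ → DyadicInterval
  | 0 => I
  | n + 1 => (I.ancestor n).parent

end DyadicInterval

open DyadicInterval

/-- Dyadic distance: `min {s+t : I^(s) = J^(t)}`, `∞` if there is no common ancestor. -/
def ddist (I J : DyadicInterval) : ℕ∞ :=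
  ⨅ (p : ℕ × ℕ) (_ : I.ancestor p.1 = J.ancestor p.2), ((p.1 + p.2 : ℕ) : ℕ∞)

/-- `μ(I)` as a real number. -/
def muR (μ : Measure ℝ) (I : DyadicInterval) : ℝ := (μ I.toSet).toReal

/-- `m(I) = μ(I₋) μ(I₊) / μ(I)`. -/
def mBal (μ : Measure ℝ) (I : DyadicInterval) : ℝ :=
  muR μ I.left * muR μ I.right / muR μ I

/-- Average `⟨f⟩_I = μ(I)⁻¹ ∫_I f dμ`. -/
def avg (μ : Measure ℝ) (I : DyadicInterval) (f : ℝ → ℝ) : ℝ :=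
  (muR μ I)⁻¹ * ∫ x in I.toSet, f x ∂μ

/-- The Haar function `h_I`. -/
def haarFn (μ : Measure ℝ) (I : DyadicInterval) : ℝ → ℝ := fun x =>
  Real.sqrt (mBal μ I) *
    (I.left.toSet.indicator (fun _ => (muR μ I.left)⁻¹) x -
      I.right.toSet.indicator (fun _ => (muR μ I.right)⁻¹) x)

/-- Pairing `⟨f,g⟩ = ∫ f g dμ`. -/
def pairing (μ : Measure ℝ) (f g : ℝ → ℝ) : ℝ := ∫ x, f x * g x ∂μ

/-- Standing assumptions: atomless, locally finite Borel measure with `μ(I) > 0`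
on all dyadic intervals. -/
def GoodMeasure (μ : Measure ℝ) : Prop :=
  IsLocallyFiniteMeasure μ ∧ NoAtoms μ ∧ ∀ I : DyadicInterval, 0 < μ I.toSet

/-- Balanced measure: `m(I) ∼ m(Î)` uniformly. -/
def BalancedMeasure (μ : Measure ℝ) : Prop :=
  GoodMeasure μ ∧ ∃ c : ℝ, 1 ≤ c ∧ ∀ I : DyadicInterval,
    c⁻¹ * mBal μ I.parent ≤ mBal μ I ∧ mBal μ I ≤ c * mBal μ I.parent

/-- `η`-sparse family of dyadic intervals. -/
def IsSparse (μ : Measure ℝ) (η : ℝ) (S : Set DyadicInterval) : Prop :=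
  ∃ E : DyadicInterval → Set ℝ,
    (∀ I ∈ S, MeasurableSet (E I)) ∧ (∀ I ∈ S, E I ⊆ I.toSet) ∧
    (∀ I ∈ S, ENNReal.ofReal (η * muR μ I) ≤ μ (E I)) ∧
    S.PairwiseDisjoint E

/-- Classical sparse form `A_S(f₁,f₂)`. -/
def formA (μ : Measure ℝ) (S : Set DyadicInterval) (f₁ f₂ : ℝ → ℝ) : ℝ :=
  ∑' I : S, avg μ I.1 f₁ * avg μ I.1 f₂ * muR μ I.1

/-- Modified sparse form `C_S^N(f₁,f₂)`. -/
def formC (μ : Measure ℝ) (N : ℕ) (S : Set DyadicInterval) (f₁ f₂ : ℝ → ℝ) : ℝ :=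
  ∑' q : {q : DyadicInterval × DyadicInterval // q.1 ∈ S ∧ q.2 ∈ S ∧
      Disjoint q.1.toSet q.2.toSet ∧ (2 : ℕ∞) < ddist q.1 q.2 ∧
      ddist q.1 q.2 ≤ (N : ℕ∞) + 2},
    avg μ q.1.1 f₁ * avg μ q.1.2 f₂ * Real.sqrt (mBal μ q.1.1 * mBal μ q.1.2)

/-- Haar shift of complexity `(s,t)` with coefficients `α`, defined pointwise. -/
def haarShift (μ : Measure ℝ) (s t : ℕ)
    (α : DyadicInterval → DyadicInterval → DyadicInterval → ℝ) (f : ℝ → ℝ) (x : ℝ) : ℝ :=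
  ∑' I : DyadicInterval, ∑' J : {J : DyadicInterval // J.ancestor s = I},
    ∑' K : {K : DyadicInterval // K.ancestor t = I},
      α I J.1 K.1 * pairing μ f (haarFn μ J.1) * haarFn μ K.1 x

/-- The dyadic Hilbert transform. -/
def dyadicHilbert (μ : Measure ℝ) (f : ℝ → ℝ) (x : ℝ) : ℝ :=
  ∑' I : DyadicInterval,
    pairing μ f (haarFn μ I) * (haarFn μ I.left x - haarFn μ I.right x)

/-- Conjugate exponent `p' = p/(p-1)`. -/
def conjExp (p : ℝ) : ℝ := p / (p - 1)

/-- The correction factor `c_p^b(I,J)`. -/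
def cpb (μ : Measure ℝ) (p : ℝ) (I J : DyadicInterval) : ℝ :=
  if I = J then 1
  else mBal μ I ^ (p / 2) * mBal μ J ^ (p / 2) / (muR μ J * muR μ I ^ (p - 1))

/-- The modified maximal operator `M^N`. -/
def maxOp (μ : Measure ℝ) (N : ℕ) (f : ℝ → ℝ) (x : ℝ) : ℝ≥0∞ :=
  ⨆ (q : DyadicInterval × DyadicInterval)
    (_ : ddist q.1 q.2 ≤ (N : ℕ∞) + 2 ∧ x ∈ q.2.toSet),
    ENNReal.ofReal (cpb μ 1 q.1 q.2 * avg μ q.1 fun y => |f y|)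

/-- A weight: a.e. positive, locally integrable. -/
def IsWeight (μ : Measure ℝ) (w : ℝ → ℝ) : Prop :=
  Measurable w ∧ (∀ᵐ x ∂μ, 0 < w x) ∧ LocallyIntegrable w μ

/-- The measure `w dμ`. -/
def wMeasure (μ : Measure ℝ) (w : ℝ → ℝ) : Measure ℝ :=
  μ.withDensity fun x => ENNReal.ofReal (w x)

/-- The quantity `c_p^b(I,J) ⟨w⟩_I ⟨w^{1-p'}⟩_J^{p-1}` (with the `ess sup` convention
for `p = 1`), valued in `ℝ≥0∞`. -/
def ApTerm (μ : Measure ℝ) (p : ℝ) (w : ℝ → ℝ) (I J : DyadicInterval) : ℝ≥0∞ :=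
  if p = 1 then
    ENNReal.ofReal (cpb μ 1 I J * avg μ I w) *
      essSup (fun x => ENNReal.ofReal (w x)⁻¹) (μ.restrict J.toSet)
  else
    ENNReal.ofReal (cpb μ p I J * avg μ I w *
      (avg μ J fun x => w x ^ (1 - conjExp p)) ^ (p - 1))

/-- The classical dyadic `A_p(μ)` characteristic. -/
def ApChar (μ : Measure ℝ) (p : ℝ) (w : ℝ → ℝ) : ℝ≥0∞ :=
  ⨆ I : DyadicInterval,
    ENNReal.ofReal (avg μ I w * (avg μ I fun x => w x ^ (1 - conjExp p)) ^ (p - 1))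

/-- The dyadic `A₂(μ)` characteristic. -/
def A2Char (μ : Measure ℝ) (w : ℝ → ℝ) : ℝ≥0∞ :=
  ⨆ I : DyadicInterval, ENNReal.ofReal (avg μ I w * avg μ I fun x => (w x)⁻¹)

/-- The complexity-`N` characteristic `[w]_{A_p^N(μ)}`. -/
def ApNChar (μ : Measure ℝ) (p : ℝ) (N : ℕ) (w : ℝ → ℝ) : ℝ≥0∞ :=
  ⨆ (q : DyadicInterval × DyadicInterval) (_ : ddist q.1 q.2 ≤ (N : ℕ∞) + 2),
    ApTerm μ p w q.1 q.2

/-- The pairs of intervals relevant for the balanced `A_p` class. -/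
def bPair (I J : DyadicInterval) : Prop :=
  J = I ∨ J = I.sibling.left ∨ J = I.sibling.right ∨
    I = J.sibling.left ∨ I = J.sibling.right

/-- The balanced characteristic `[w]_{A_p^b(μ)}`. -/
def ApbChar (μ : Measure ℝ) (p : ℝ) (w : ℝ → ℝ) : ℝ≥0∞ :=
  ⨆ (q : DyadicInterval × DyadicInterval) (_ : bPair q.1 q.2), ApTerm μ p w q.1 q.2

/-- `L^p` norm (as an element of `ℝ≥0∞`) of an `ℝ≥0∞`-valued function. -/
def lpNormENN (ν : Measure ℝ) (p : ℝ) (g : ℝ → ℝ≥0∞) : ℝ≥0∞ :=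
  (∫⁻ x, g x ^ p ∂ν) ^ (1 / p)


/-! ### Auxiliary lemmas -/

namespace DyadicInterval

instance : Countable DyadicInterval := by
  have : Function.Injective (fun I : DyadicInterval => (I.k, I.j)) := by
    intro ⟨a,b⟩ ⟨c,d⟩ h; simpa using h
  exact Function.Injective.countable this

@[simp] lemma ancestor_zero' (I : DyadicInterval) : I.ancestor 0 = I := rfl

lemma ancestor_succ (I : DyadicInterval) (n : ℕ) :
    I.ancestor (n+1) = (I.ancestor n).parent := rfl

lemma ancestor_k (I : DyadicInterval) (n : ℕ) : (I.ancestor n).k = I.k - n := by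
  induction n with
  | zero => simp
  | succ n ih => simp [ancestor_succ, parent, ih]; push_cast; ring

lemma ancestor_add (I : DyadicInterval) (a b : ℕ) :
    I.ancestor (a + b) = (I.ancestor a).ancestor b := by
  induction b with
  | zero => simp
  | succ b ih => rw [← Nat.add_assoc, ancestor_succ, ih, ancestor_succ]

lemma parent_j (I : DyadicInterval) :
    2 * I.parent.j ≤ I.j ∧ I.j < 2 * I.parent.j + 2 := by
  have h : I.parent.j = I.j / 2 := Int.fdiv_eq_ediv_of_nonneg I.j (by norm_num)
  constructor
  · rw [h]; omega
  · rw [h]; omega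

lemma ancestor_j (I : DyadicInterval) (t : ℕ) :
    2^t * (I.ancestor t).j ≤ I.j ∧ I.j < 2^t * ((I.ancestor t).j + 1) := by
  induction t with
  | zero => simp
  | succ t ih =>
    have hp := parent_j (I.ancestor t)
    rw [ancestor_succ]
    constructor
    · calc (2:ℤ)^(t+1) * (I.ancestor t).parent.j
          = 2^t * (2 * (I.ancestor t).parent.j) := by ring
        _ ≤ 2^t * (I.ancestor t).j := by
            apply mul_le_mul_of_nonneg_left hp.1 (by positivity)
        _ ≤ I.j := ih.1
    · calc I.j < 2^t * ((I.ancestor t).j + 1) := ih.2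
        _ ≤ 2^t * ((2 * (I.ancestor t).parent.j + 2)) := by
            apply mul_le_mul_of_nonneg_left (by omega) (by positivity)
        _ = 2^(t+1) * ((I.ancestor t).parent.j + 1) := by ring

lemma toSet_nonempty (I : DyadicInterval) : I.toSet.Nonempty := by
  rw [toSet]
  refine Set.nonempty_Ico.2 ?_
  have : (0:ℝ) < 2 ^ (-I.k) := by positivity
  nlinarith

lemma measurableSet_toSet (I : DyadicInterval) : MeasurableSet I.toSet :=
  measurableSet_Ico

lemma toSet_subset_ancestor (I : DyadicInterval) (t : ℕ) :
    I.toSet ⊆ (I.ancestor t).toSet := by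
  intro x hx
  obtain ⟨h1, h2⟩ := hx
  have hj := ancestor_j I t
  have hk := ancestor_k I t
  have h2pos : (0:ℝ) < 2 ^ (-I.k) := by positivity
  have hkey : (2:ℝ) ^ (-(I.ancestor t).k) = 2 ^ (-I.k) * 2 ^ t := by
    rw [hk]
    rw [← zpow_natCast (2:ℝ) t, ← zpow_add₀ (by norm_num : (2:ℝ) ≠ 0)]
    ring_nf
  constructor
  · rw [hkey]
    calc (2:ℝ)^(-I.k) * 2^t * (I.ancestor t).j
        = 2^(-I.k) * ((2^t * (I.ancestor t).j : ℤ) : ℝ) := by push_cast; ring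
      _ ≤ 2^(-I.k) * (I.j : ℝ) := by
          apply mul_le_mul_of_nonneg_left _ h2pos.le
          exact_mod_cast hj.1
      _ ≤ x := h1
  · rw [hkey]
    calc x < 2^(-I.k) * ((I.j:ℝ) + 1) := h2
      _ ≤ 2^(-I.k) * ((2^t * ((I.ancestor t).j + 1) : ℤ) : ℝ) := by
          apply mul_le_mul_of_nonneg_left _ h2pos.le
          exact_mod_cast hj.2
      _ = 2^(-I.k) * 2^t * (((I.ancestor t).j:ℝ) + 1) := by push_cast; ring

lemma disjoint_of_same_k {I I' : DyadicInterval} (hk : I.k = I'.k) (hne : I ≠ I') :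
    Disjoint I.toSet I'.toSet := by
  have hj : I.j ≠ I'.j := by
    intro h; apply hne; cases I; cases I'; simp_all
  have h2pos : (0:ℝ) < 2 ^ (-I.k) := by positivity
  rw [toSet, toSet, Set.Ico_disjoint_Ico]
  rcases lt_or_gt_of_ne hj with h | h
  · rw [← hk]
    have : (I.j:ℝ) + 1 ≤ I'.j := by exact_mod_cast h
    calc min (2^(-I.k) * ((I.j:ℝ)+1)) (2^(-I.k) * ((I'.j:ℝ)+1))
        ≤ 2^(-I.k) * ((I.j:ℝ)+1) := min_le_left _ _
      _ ≤ 2^(-I.k) * (I'.j:ℝ) := by nlinarith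
      _ ≤ max (2^(-I.k) * (I.j:ℝ)) (2^(-I.k) * (I'.j:ℝ)) := le_max_right _ _
  · rw [← hk]
    have : (I'.j:ℝ) + 1 ≤ I.j := by exact_mod_cast h
    calc min (2^(-I.k) * ((I.j:ℝ)+1)) (2^(-I.k) * ((I'.j:ℝ)+1))
        ≤ 2^(-I.k) * ((I'.j:ℝ)+1) := min_le_right _ _
      _ ≤ 2^(-I.k) * (I.j:ℝ) := by nlinarith
      _ ≤ max (2^(-I.k) * (I.j:ℝ)) (2^(-I.k) * (I'.j:ℝ)) := le_max_left _ _

lemma eq_of_same_k_not_disjoint {I I' : DyadicInterval} (hk : I.k = I'.k)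
    (h : ¬ Disjoint I.toSet I'.toSet) : I = I' := by
  by_contra hne
  exact h (disjoint_of_same_k hk hne)

lemma eq_ancestor_of_not_disjoint {I K : DyadicInterval} (hk : I.k ≤ K.k)
    (h : ¬ Disjoint I.toSet K.toSet) : I = K.ancestor (K.k - I.k).toNat := by
  set t := (K.k - I.k).toNat with ht
  have hkk : (K.ancestor t).k = I.k := by
    rw [ancestor_k]; omega
  apply eq_of_same_k_not_disjoint hkk.symm
  intro hd
  exact h (hd.mono_right (toSet_subset_ancestor K t))

lemma subset_of_not_disjoint {I K : DyadicInterval} (hk : I.k ≤ K.k)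
    (h : ¬ Disjoint I.toSet K.toSet) : K.toSet ⊆ I.toSet := by
  have := eq_ancestor_of_not_disjoint hk h
  rw [this]
  exact toSet_subset_ancestor K _

lemma k_le_of_subset {I I' : DyadicInterval} (h : I.toSet ⊆ I'.toSet) : I'.k ≤ I.k := by
  by_contra hlt
  push_neg at hlt
  have hnd : ¬ Disjoint I'.toSet I.toSet := by
    rw [Set.not_disjoint_iff]
    obtain ⟨x, hx⟩ := toSet_nonempty I
    exact ⟨x, h hx, hx⟩
  have hsub : I'.toSet ⊆ I.toSet := by
    apply subset_of_not_disjoint (le_of_lt hlt)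
    rw [Set.not_disjoint_iff] at hnd ⊢
    obtain ⟨x, h1, h2⟩ := hnd
    exact ⟨x, h2, h1⟩
  have heq : I.toSet = I'.toSet := le_antisymm h hsub
  rw [toSet, toSet] at heq
  have h1 : (0:ℝ) < 2 ^ (-I.k) := by positivity
  have h2 : (0:ℝ) < 2 ^ (-I'.k) := by positivity
  have hne : (2:ℝ)^(-I.k) * I.j < 2^(-I.k) * (I.j + 1) := by nlinarith
  rw [Set.Ico_eq_Ico_iff (Or.inl hne)] at heq
  have hlen : (2:ℝ)^(-I.k) = 2^(-I'.k) := by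
    have e1 := heq.1
    have e2 := heq.2
    nlinarith
  have : -I.k = -I'.k :=
    zpow_right_injective₀ (by norm_num) (by norm_num) hlen
  omega

lemma eq_ancestor_of_subset {I I' : DyadicInterval} (h : I.toSet ⊆ I'.toSet) :
    I' = I.ancestor (I.k - I'.k).toNat := by
  have hk := k_le_of_subset h
  apply eq_ancestor_of_not_disjoint hk
  rw [Set.not_disjoint_iff]
  obtain ⟨x, hx⟩ := toSet_nonempty I
  exact ⟨x, h hx, hx⟩

lemma card_cousins_le (𝒜 : Finset DyadicInterval) (A : DyadicInterval) (M : ℕ)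
    (h : ∀ K ∈ 𝒜, ∃ t v : ℕ, t ≤ M ∧ v ≤ M ∧ K.ancestor t = A.ancestor v) :
    𝒜.card ≤ (M+1)^2 * 2^M := by
  classical
  choose t v ht hv heq using h
  set φ : DyadicInterval → ℕ × ℕ × ℕ := fun K =>
    if hK : K ∈ 𝒜 then (t K hK, v K hK, (K.j - 2^(t K hK) * (A.ancestor (v K hK)).j).toNat)
    else (0,0,0) with hφ
  have hmaps : ∀ K ∈ 𝒜, φ K ∈ (Finset.range (M+1)) ×ˢ (Finset.range (M+1)) ×ˢ (Finset.range (2^M)) := by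
    intro K hK
    simp only [hφ, dif_pos hK, Finset.mem_product, Finset.mem_range]
    refine ⟨Nat.lt_succ_of_le (ht K hK), Nat.lt_succ_of_le (hv K hK), ?_⟩
    have hj := ancestor_j K (t K hK)
    rw [heq K hK] at hj
    have hexp : (2:ℤ)^(t K hK) * ((A.ancestor (v K hK)).j + 1)
        = 2^(t K hK) * (A.ancestor (v K hK)).j + 2^(t K hK) := by ring
    have h1 : (0:ℤ) ≤ K.j - 2^(t K hK) * (A.ancestor (v K hK)).j := by omega
    have h2 : K.j - 2^(t K hK) * (A.ancestor (v K hK)).j < 2^(t K hK) := by omega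
    have h3 : (2:ℤ)^(t K hK) ≤ 2^M := by
      apply pow_le_pow_right₀ (by norm_num) (ht K hK)
    have h4 : ((2:ℕ)^M : ℤ) = (2:ℤ)^M := by push_cast; ring
    rw [← Int.ofNat_lt, Int.toNat_of_nonneg h1]
    omega
  apply le_trans (Finset.card_le_card_of_injOn φ hmaps ?_)
  · simp [Finset.card_product]; ring_nf; omega
  · intro K1 h1 K2 h2 hf
    simp only [Finset.mem_coe] at h1 h2
    simp only [hφ, dif_pos h1, dif_pos h2, Prod.mk.injEq] at hf
    obtain ⟨e1, e2, e3⟩ := hf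
    have hj1 := ancestor_j K1 (t K1 h1)
    rw [heq K1 h1] at hj1
    have hj2 := ancestor_j K2 (t K2 h2)
    rw [heq K2 h2] at hj2
    have hkk1 := ancestor_k K1 (t K1 h1)
    rw [heq K1 h1, ancestor_k] at hkk1
    have hkk2 := ancestor_k K2 (t K2 h2)
    rw [heq K2 h2, ancestor_k] at hkk2
    have hk : K1.k = K2.k := by omega
    have ha : A.ancestor (v K1 h1) = A.ancestor (v K2 h2) := by rw [e2]
    have hjeq : K1.j = K2.j := by
      have hb : (2:ℤ)^(t K1 h1) = 2^(t K2 h2) := by rw [e1]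
      have hj1' : 2 ^ t K2 h2 * (A.ancestor (v K2 h2)).j ≤ K1.j ∧
          K1.j < 2 ^ t K2 h2 * ((A.ancestor (v K2 h2)).j + 1) := by
        rw [← ha, ← hb]; exact hj1
      clear hj1
      simp only [ha, hb] at e3
      have hexp2 : (2:ℤ)^(t K2 h2) * ((A.ancestor (v K2 h2)).j + 1)
          = 2^(t K2 h2) * (A.ancestor (v K2 h2)).j + 2^(t K2 h2) := by ring
      omega
    cases K1; cases K2; simp_all

/-- Maximal selection for finite families of dyadic intervals. -/
lemma exists_maximal_cover (𝒜 : Finset DyadicInterval) :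
    ∃ ℳ ⊆ 𝒜, ((ℳ : Set DyadicInterval)).Pairwise (fun J J' => Disjoint J.toSet J'.toSet) ∧
      ∀ K ∈ 𝒜, ∃ K' ∈ ℳ, K.toSet ⊆ K'.toSet := by
  classical
  set P : DyadicInterval → Prop := fun J => ∀ J' ∈ 𝒜, J.toSet ⊆ J'.toSet → J' = J with hP
  refine ⟨𝒜.filter (fun J => P J), Finset.filter_subset _ _, ?_, ?_⟩
  · intro J1 h1 J2 h2 hne
    simp only [Finset.coe_filter, Set.mem_setOf_eq] at h1 h2
    by_contra hnd
    rcases le_total J1.k J2.k with hk | hk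
    · have hsub := subset_of_not_disjoint hk hnd
      exact hne (h2.2 J1 h1.1 hsub)
    · have hsub := subset_of_not_disjoint hk (fun hd => hnd hd.symm)
      exact hne (h1.2 J2 h2.1 hsub).symm
  · intro K hK
    obtain ⟨J, hJmem, hJmin⟩ := Finset.exists_min_image
      (𝒜.filter (fun J' => K.toSet ⊆ J'.toSet)) (fun J => J.k)
      ⟨K, by simp [hK]⟩
    simp only [Finset.mem_filter] at hJmem
    refine ⟨J, ?_, hJmem.2⟩
    simp only [Finset.mem_filter]
    refine ⟨hJmem.1, ?_⟩
    intro J' hJ' hsub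
    have hmem' : J' ∈ 𝒜.filter (fun J'' => K.toSet ⊆ J''.toSet) := by
      simp only [Finset.mem_filter]
      exact ⟨hJ', hJmem.2.trans hsub⟩
    have hk1 := hJmin J' hmem'
    have hk2 := k_le_of_subset hsub
    have hkeq : J'.k = J.k := le_antisymm hk2 hk1
    have := eq_ancestor_of_subset hsub
    rw [this, show (J.k - J'.k).toNat = 0 by omega, ancestor_zero']

end DyadicInterval

section MeasureLemmas

open DyadicInterval

variable {μ : Measure ℝ}

lemma muI_lt_top (hμ : GoodMeasure μ) (I : DyadicInterval) : μ I.toSet < ⊤ := by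
  haveI := hμ.1
  have hsub : I.toSet ⊆ Set.Icc ((2 : ℝ) ^ (-I.k) * (I.j : ℝ)) ((2 : ℝ) ^ (-I.k) * ((I.j : ℝ) + 1)) :=
    Set.Ico_subset_Icc_self
  exact lt_of_le_of_lt (measure_mono hsub) (isCompact_Icc.measure_lt_top)

lemma muR_pos (hμ : GoodMeasure μ) (I : DyadicInterval) : 0 < muR μ I :=
  ENNReal.toReal_pos (hμ.2.2 I).ne' (muI_lt_top hμ I).ne

lemma muR_mono (hμ : GoodMeasure μ) {I I' : DyadicInterval} (h : I.toSet ⊆ I'.toSet) :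
    muR μ I ≤ muR μ I' :=
  ENNReal.toReal_mono (muI_lt_top hμ I').ne (measure_mono h)

lemma left_subset (I : DyadicInterval) : I.left.toSet ⊆ I.toSet := by
  rw [toSet, toSet, left]
  have h2pos : (0:ℝ) < 2 ^ (-I.k) := by positivity
  have hk : (2:ℝ) ^ (-(I.k+1)) = 2^(-I.k) / 2 := by
    rw [show -(I.k+1) = -I.k + (-1) by ring, zpow_add₀ (by norm_num : (2:ℝ) ≠ 0)]
    norm_num
    ring
  apply Set.Ico_subset_Ico
  · rw [hk]; push_cast; nlinarith
  · rw [hk]; push_cast; nlinarith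

lemma right_subset (I : DyadicInterval) : I.right.toSet ⊆ I.toSet := by
  rw [toSet, toSet, right]
  have h2pos : (0:ℝ) < 2 ^ (-I.k) := by positivity
  have hk : (2:ℝ) ^ (-(I.k+1)) = 2^(-I.k) / 2 := by
    rw [show -(I.k+1) = -I.k + (-1) by ring, zpow_add₀ (by norm_num : (2:ℝ) ≠ 0)]
    norm_num
    ring
  apply Set.Ico_subset_Ico
  · rw [hk]; push_cast; nlinarith
  · rw [hk]; push_cast; nlinarith

lemma mBal_pos (hμ : GoodMeasure μ) (I : DyadicInterval) : 0 < mBal μ I := by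
  rw [mBal]
  have := muR_pos hμ I
  have := muR_pos hμ I.left
  have := muR_pos hμ I.right
  positivity

lemma mBal_le_muR (hμ : GoodMeasure μ) (I : DyadicInterval) : mBal μ I ≤ muR μ I := by
  rw [mBal]
  have h1 := muR_pos hμ I
  have h2 := muR_pos hμ I.left
  have h3 := muR_pos hμ I.right
  have hL : muR μ I.left ≤ muR μ I := muR_mono hμ (left_subset I)
  have hR : muR μ I.right ≤ muR μ I := muR_mono hμ (right_subset I)
  rw [div_le_iff₀ h1]
  nlinarith

section Balanced

variable {c : ℝ} (hc : 1 ≤ c)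
variable (hbal : ∀ I : DyadicInterval,
  c⁻¹ * mBal μ I.parent ≤ mBal μ I ∧ mBal μ I ≤ c * mBal μ I.parent)

include hc hbal

lemma mBal_le_pow_ancestor (hμ : GoodMeasure μ) (I : DyadicInterval) (n : ℕ) :
    mBal μ I ≤ c^n * mBal μ (I.ancestor n) := by
  induction n with
  | zero => simp
  | succ n ih =>
    calc mBal μ I ≤ c^n * mBal μ (I.ancestor n) := ih
      _ ≤ c^n * (c * mBal μ (I.ancestor n).parent) := by
          apply mul_le_mul_of_nonneg_left (hbal (I.ancestor n)).2 (by positivity)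
      _ = c^(n+1) * mBal μ (I.ancestor (n+1)) := by rw [ancestor_succ]; ring

lemma ancestor_mBal_le_pow (hμ : GoodMeasure μ) (I : DyadicInterval) (n : ℕ) :
    mBal μ (I.ancestor n) ≤ c^n * mBal μ I := by
  induction n with
  | zero => simp
  | succ n ih =>
    have hstep : mBal μ (I.ancestor (n+1)) ≤ c * mBal μ (I.ancestor n) := by
      have h := (hbal (I.ancestor n)).1
      rw [← ancestor_succ] at h
      have hcpos : 0 < c := lt_of_lt_of_le one_pos hc
      calc mBal μ (I.ancestor (n+1)) = c * (c⁻¹ * mBal μ (I.ancestor (n+1))) := by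
            field_simp
        _ ≤ c * mBal μ (I.ancestor n) := by
            apply mul_le_mul_of_nonneg_left h hcpos.le
    calc mBal μ (I.ancestor (n+1)) ≤ c * mBal μ (I.ancestor n) := hstep
      _ ≤ c * (c^n * mBal μ I) := by
          apply mul_le_mul_of_nonneg_left ih (by positivity)
      _ = c^(n+1) * mBal μ I := by ring

/-- The key balanced estimate: if `J` and `K` have a common ancestor within `M` generations,
then `√(m(J) m(K)) ≤ c^M m(K)`. -/
lemma sqrt_mm_le (hμ : GoodMeasure μ) {J K : DyadicInterval} {s t M : ℕ}
    (hs : s ≤ M) (ht : t ≤ M) (heq : J.ancestor s = K.ancestor t) :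
    Real.sqrt (mBal μ J * mBal μ K) ≤ c^M * mBal μ K := by
  have hcpos : (0:ℝ) < c := lt_of_lt_of_le one_pos hc
  have hKpos := mBal_pos hμ K
  have hJpos := mBal_pos hμ J
  have h1 : mBal μ J ≤ c^s * mBal μ (J.ancestor s) := mBal_le_pow_ancestor hc hbal hμ J s
  have h2 : mBal μ (K.ancestor t) ≤ c^t * mBal μ K := ancestor_mBal_le_pow hc hbal hμ K t
  rw [heq] at h1
  have h3 : mBal μ J ≤ c^(s+t) * mBal μ K := by
    calc mBal μ J ≤ c^s * mBal μ (K.ancestor t) := h1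
      _ ≤ c^s * (c^t * mBal μ K) := by
          apply mul_le_mul_of_nonneg_left h2 (by positivity)
      _ = c^(s+t) * mBal μ K := by ring
  have h4 : mBal μ J ≤ c^(2*M) * mBal μ K := by
    apply le_trans h3
    apply mul_le_mul_of_nonneg_right _ hKpos.le
    apply pow_le_pow_right₀ hc
    omega
  calc Real.sqrt (mBal μ J * mBal μ K)
      ≤ Real.sqrt (c^(2*M) * mBal μ K * mBal μ K) := by
        apply Real.sqrt_le_sqrt
        apply mul_le_mul_of_nonneg_right h4 hKpos.le
    _ = Real.sqrt ((c^M * mBal μ K)^2) := by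
        congr 1
        ring
    _ = c^M * mBal μ K := by
        apply Real.sqrt_sq
        positivity

lemma sqrt_mm_le' (hμ : GoodMeasure μ) {J K : DyadicInterval} {s t M : ℕ}
    (hs : s ≤ M) (ht : t ≤ M) (heq : J.ancestor s = K.ancestor t) :
    Real.sqrt (mBal μ J * mBal μ K) ≤ c^M * mBal μ J := by
  rw [mul_comm]
  exact sqrt_mm_le hc hbal hμ ht hs heq.symm

end Balanced

lemma avg_nonneg_abs (hμ : GoodMeasure μ) (I : DyadicInterval) (f : ℝ → ℝ) :
    0 ≤ avg μ I (fun x => |f x|) := by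
  rw [avg]
  exact mul_nonneg (inv_nonneg.2 (muR_pos hμ I).le) (integral_nonneg (fun x => abs_nonneg _))

lemma setIntegral_eq_avg_mul (hμ : GoodMeasure μ) (I : DyadicInterval) (f : ℝ → ℝ) :
    ∫ x in I.toSet, |f x| ∂μ = avg μ I (fun x => |f x|) * muR μ I := by
  rw [avg]
  have := (muR_pos hμ I).ne'
  field_simp

lemma setIntegral_abs_le_one (hμ : GoodMeasure μ) (I : DyadicInterval) {f : ℝ → ℝ}
    (hf : Integrable f μ) (hnorm : (∫ x, |f x| ∂μ) ≤ 1) :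
    ∫ x in I.toSet, |f x| ∂μ ≤ 1 := by
  apply le_trans (setIntegral_le_integral hf.abs (Filter.Eventually.of_forall (fun x => abs_nonneg _)))
  exact hnorm

/-- Sum of integrals of `|f|` over pairwise disjoint dyadic intervals is at most `‖f‖₁`. -/
lemma sum_setIntegral_le (hμ : GoodMeasure μ) (ℳ : Finset DyadicInterval)
    (hdisj : ((ℳ : Set DyadicInterval)).Pairwise (fun J J' => Disjoint J.toSet J'.toSet))
    {f : ℝ → ℝ} (hf : Integrable f μ) (hnorm : (∫ x, |f x| ∂μ) ≤ 1) :
    ∑ J ∈ ℳ, ∫ x in J.toSet, |f x| ∂μ ≤ 1 := by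
  rw [← MeasureTheory.integral_biUnion_finset ℳ (fun J _ => measurableSet_toSet J)
    hdisj (fun J _ => hf.abs.integrableOn)]
  exact le_trans (setIntegral_le_integral hf.abs
    (Filter.Eventually.of_forall (fun x => abs_nonneg _))) hnorm

end MeasureLemmas

section BadSet

open DyadicInterval

variable (μ : Measure ℝ) (N : ℕ) (f₁ : ℝ → ℝ)

/-- `K` is `s`-bad: some `J` within `N+2` dyadic generations has a large corrected average. -/
def BadP (s : ℝ) (K : DyadicInterval) : Prop :=
  ∃ J : DyadicInterval, (∃ s' t' : ℕ, s' ≤ N+2 ∧ t' ≤ N+2 ∧ J.ancestor s' = K.ancestor t') ∧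
    s * muR μ K < avg μ J (fun x => |f₁ x|) * Real.sqrt (mBal μ J * mBal μ K)

/-- The union of all `s`-bad intervals. -/
def BadSet (s : ℝ) : Set ℝ :=
  ⋃ K ∈ {K : DyadicInterval | BadP μ N f₁ s K}, K.toSet

lemma badSet_measurable (s : ℝ) : MeasurableSet (BadSet μ N f₁ s) := by
  apply MeasurableSet.biUnion (Set.to_countable _)
  exact fun K _ => measurableSet_toSet K

lemma subset_badSet {s : ℝ} {K : DyadicInterval} (h : BadP μ N f₁ s K) :
    K.toSet ⊆ BadSet μ N f₁ s :=
  Set.subset_biUnion_of_mem h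

end BadSet

section WeakType

open DyadicInterval

variable {μ : Measure ℝ} (hμ : GoodMeasure μ) {c : ℝ} (hc : 1 ≤ c)
variable (hbal : ∀ I : DyadicInterval,
  c⁻¹ * mBal μ I.parent ≤ mBal μ I ∧ mBal μ I ≤ c * mBal μ I.parent)
variable {N : ℕ} {f₁ : ℝ → ℝ} (hf₁ : Integrable f₁ μ)
variable (hnorm : (∫ x, |f₁ x| ∂μ) ≤ 1)

include hμ hc hbal hf₁ hnorm

/-- Finite version of the weak-type estimate for the bad set. -/
lemma finite_weak_type {s : ℝ} (hs : 0 < s) (𝒜 : Finset DyadicInterval)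
    (h𝒜 : ∀ K ∈ 𝒜, BadP μ N f₁ s K) :
    μ (⋃ K ∈ 𝒜, K.toSet) ≤
      ENNReal.ofReal ((1 + (((N+3)^2 * 2^(N+2) : ℕ) : ℝ)) * c^(N+2) / s) := by
  classical
  set c₁ : ℝ := c^(N+2) with hc₁
  have hc₁pos : 0 < c₁ := by positivity
  set Pn : ℕ := (N+3)^2 * 2^(N+2) with hPn
  set f₁' : ℝ → ℝ := fun x => |f₁ x| with hf₁'
  choose Jw hrep hbad using h𝒜
  -- each witness J has a large average, hence small measure
  have hJkey : ∀ (K) (hK : K ∈ 𝒜),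
      muR μ (Jw K hK) ≤ c₁/s * ∫ x in (Jw K hK).toSet, f₁' x ∂μ := by
    intro K hK
    obtain ⟨s', t', hs', ht', heq⟩ := hrep K hK
    have hsqrt : Real.sqrt (mBal μ (Jw K hK) * mBal μ K) ≤ c₁ * mBal μ K :=
      sqrt_mm_le hc hbal hμ hs' ht' heq
    have haK : 0 ≤ avg μ (Jw K hK) f₁' := avg_nonneg_abs hμ _ f₁
    have hmK : mBal μ K ≤ muR μ K := mBal_le_muR hμ K
    have hmKpos := mBal_pos hμ K
    have hKpos := muR_pos hμ K
    have hJpos := muR_pos hμ (Jw K hK)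
    have h1 : s * muR μ K < avg μ (Jw K hK) f₁' * (c₁ * muR μ K) := by
      calc s * muR μ K < avg μ (Jw K hK) f₁' * Real.sqrt (mBal μ (Jw K hK) * mBal μ K) :=
            hbad K hK
        _ ≤ avg μ (Jw K hK) f₁' * (c₁ * muR μ K) := by
            apply mul_le_mul_of_nonneg_left _ haK
            exact le_trans hsqrt (mul_le_mul_of_nonneg_left hmK hc₁pos.le)
    have h2 : s < avg μ (Jw K hK) f₁' * c₁ := by nlinarith
    have h4 : ∫ x in (Jw K hK).toSet, f₁' x ∂μ = avg μ (Jw K hK) f₁' * muR μ (Jw K hK) :=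
      setIntegral_eq_avg_mul hμ _ f₁
    rw [h4]
    rw [div_mul_eq_mul_div, le_div_iff₀ hs]
    nlinarith
  -- each bad K has measure controlled by the integral over its witness
  have hKkey : ∀ (K) (hK : K ∈ 𝒜),
      muR μ K ≤ c₁/s * ∫ x in (Jw K hK).toSet, f₁' x ∂μ := by
    intro K hK
    obtain ⟨s', t', hs', ht', heq⟩ := hrep K hK
    have hsqrt : Real.sqrt (mBal μ (Jw K hK) * mBal μ K) ≤ c₁ * mBal μ (Jw K hK) :=
      sqrt_mm_le' hc hbal hμ hs' ht' heq
    have haK : 0 ≤ avg μ (Jw K hK) f₁' := avg_nonneg_abs hμ _ f₁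
    have hmJ : mBal μ (Jw K hK) ≤ muR μ (Jw K hK) := mBal_le_muR hμ (Jw K hK)
    have h4 : ∫ x in (Jw K hK).toSet, f₁' x ∂μ = avg μ (Jw K hK) f₁' * muR μ (Jw K hK) :=
      setIntegral_eq_avg_mul hμ _ f₁
    have h1 : s * muR μ K < avg μ (Jw K hK) f₁' * (c₁ * muR μ (Jw K hK)) := by
      calc s * muR μ K < avg μ (Jw K hK) f₁' * Real.sqrt (mBal μ (Jw K hK) * mBal μ K) :=
            hbad K hK
        _ ≤ avg μ (Jw K hK) f₁' * (c₁ * muR μ (Jw K hK)) := by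
            apply mul_le_mul_of_nonneg_left _ haK
            exact le_trans hsqrt (mul_le_mul_of_nonneg_left hmJ hc₁pos.le)
    rw [h4, div_mul_eq_mul_div, le_div_iff₀ hs]
    nlinarith
  -- maximal cover of the witnesses
  set 𝒥 : Finset DyadicInterval := 𝒜.attach.image (fun K => Jw K.1 K.2) with h𝒥
  obtain ⟨ℳ, hℳsub, hℳdisj, hℳcover⟩ := DyadicInterval.exists_maximal_cover 𝒥
  have hψex : ∀ (K : {x // x ∈ 𝒜}), ∃ J' ∈ ℳ, (Jw K.1 K.2).toSet ⊆ J'.toSet := by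
    intro K
    apply hℳcover
    rw [h𝒥]
    exact Finset.mem_image.2 ⟨K, Finset.mem_attach _ _, rfl⟩
  choose ψ hψmem hψsub using hψex
  have hℳkey : ∀ J' ∈ ℳ, muR μ J' ≤ c₁/s * ∫ x in J'.toSet, f₁' x ∂μ := by
    intro J' hJ'
    have := hℳsub hJ'
    rw [h𝒥, Finset.mem_image] at this
    obtain ⟨K, -, rfl⟩ := this
    exact hJkey K.1 K.2
  set 𝒜c : Finset {x // x ∈ 𝒜} := 𝒜.attach.filter (fun K => ¬ K.1.toSet ⊆ (ψ K).toSet)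
    with h𝒜c
  -- cover
  have hcover : (⋃ K ∈ 𝒜, K.toSet) ⊆ (⋃ J ∈ ℳ, J.toSet) ∪ (⋃ K ∈ 𝒜c, K.1.toSet) := by
    intro x hx
    rw [Set.mem_iUnion₂] at hx
    obtain ⟨K, hK, hxK⟩ := hx
    by_cases hsub : K.toSet ⊆ (ψ ⟨K, hK⟩).toSet
    · left
      rw [Set.mem_iUnion₂]
      exact ⟨ψ ⟨K, hK⟩, hψmem _, hsub hxK⟩
    · right
      rw [Set.mem_iUnion₂]
      refine ⟨⟨K, hK⟩, ?_, hxK⟩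
      rw [h𝒜c, Finset.mem_filter]
      exact ⟨Finset.mem_attach _ _, hsub⟩
  -- cousin structure of the non-contained intervals
  have hcousin : ∀ K ∈ 𝒜c, ∃ t v : ℕ, t ≤ N+2 ∧ v ≤ N+2 ∧
      K.1.ancestor t = (ψ K).ancestor v := by
    intro K hK𝒜c
    rw [h𝒜c, Finset.mem_filter] at hK𝒜c
    obtain ⟨-, hnsub⟩ := hK𝒜c
    obtain ⟨s', t', hs', ht', heq⟩ := hrep K.1 K.2
    have hanc : ψ K = (Jw K.1 K.2).ancestor ((Jw K.1 K.2).k - (ψ K).k).toNat :=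
      eq_ancestor_of_subset (hψsub K)
    set u : ℕ := ((Jw K.1 K.2).k - (ψ K).k).toNat with hu
    by_cases hus : u ≤ s'
    · refine ⟨t', s' - u, ht', by omega, ?_⟩
      rw [heq.symm, show s' = u + (s' - u) by omega, ancestor_add, ← hanc]
      congr 1
      omega
    · exfalso
      apply hnsub
      have : ψ K = K.1.ancestor (t' + (u - s')) := by
        rw [hanc, show u = s' + (u - s') by omega, ancestor_add, heq, ← ancestor_add]
        congr 1
        omega
      rw [this]
      exact toSet_subset_ancestor _ _
  -- fiber bound for the cousins
  have hfiber : ∀ J' ∈ ℳ,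
      ∑ K ∈ 𝒜c.filter (fun K => ψ K = J'), muR μ K.1
        ≤ (Pn : ℝ) * (c₁/s * ∫ x in J'.toSet, f₁' x ∂μ) := by
    intro J' hJ'
    have hintnn : 0 ≤ ∫ x in J'.toSet, f₁' x ∂μ := integral_nonneg (fun x => abs_nonneg _)
    have hbound : ∀ K ∈ 𝒜c.filter (fun K => ψ K = J'),
        muR μ K.1 ≤ c₁/s * ∫ x in J'.toSet, f₁' x ∂μ := by
      intro K hK
      rw [Finset.mem_filter] at hK
      obtain ⟨hK1, hK2⟩ := hK
      refine le_trans (hKkey K.1 K.2) ?_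
      apply mul_le_mul_of_nonneg_left _ (by positivity)
      apply MeasureTheory.setIntegral_mono_set hf₁.abs.integrableOn
        (Filter.Eventually.of_forall (fun x => abs_nonneg _))
      rw [← hK2]
      exact Filter.Eventually.of_forall (hψsub K)
    have hcard : (𝒜c.filter (fun K => ψ K = J')).card ≤ Pn := by
      have himg : ((𝒜c.filter (fun K => ψ K = J')).image (fun K => K.1)).card
          = (𝒜c.filter (fun K => ψ K = J')).card := by
        apply Finset.card_image_of_injOn
        intro a _ b _ hab
        exact Subtype.ext hab
      rw [← himg, hPn]
      apply card_cousins_le _ J' (N+2)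
      intro Kv hKv
      rw [Finset.mem_image] at hKv
      obtain ⟨K, hK, rfl⟩ := hKv
      rw [Finset.mem_filter] at hK
      obtain ⟨t, v, htle, hvle, heq2⟩ := hcousin K hK.1
      exact ⟨t, v, htle, hvle, by rw [heq2, hK.2]⟩
    calc ∑ K ∈ 𝒜c.filter (fun K => ψ K = J'), muR μ K.1
        ≤ (𝒜c.filter (fun K => ψ K = J')).card • (c₁/s * ∫ x in J'.toSet, f₁' x ∂μ) :=
          Finset.sum_le_card_nsmul _ _ _ hbound
      _ = ((𝒜c.filter (fun K => ψ K = J')).card : ℝ) * (c₁/s * ∫ x in J'.toSet, f₁' x ∂μ) := by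
          rw [nsmul_eq_mul]
      _ ≤ (Pn : ℝ) * (c₁/s * ∫ x in J'.toSet, f₁' x ∂μ) := by
          apply mul_le_mul_of_nonneg_right _ (by positivity)
          exact_mod_cast hcard
  -- real total
  have hreal : ∑ J ∈ ℳ, muR μ J + ∑ K ∈ 𝒜c, muR μ K.1 ≤ (1 + (Pn : ℝ)) * c₁ / s := by
    have h1 : ∑ K ∈ 𝒜c, muR μ K.1
        ≤ ∑ J' ∈ ℳ, (Pn:ℝ) * (c₁/s * ∫ x in J'.toSet, f₁' x ∂μ) := by
      rw [← Finset.sum_fiberwise_of_maps_to (fun K hK => hψmem K) (fun K => muR μ K.1)]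
      apply Finset.sum_le_sum
      intro J' hJ'
      exact hfiber J' hJ'
    have h2 : ∑ J ∈ ℳ, muR μ J ≤ ∑ J ∈ ℳ, c₁/s * ∫ x in J.toSet, f₁' x ∂μ :=
      Finset.sum_le_sum hℳkey
    have h3 : ∑ J ∈ ℳ, ∫ x in J.toSet, f₁' x ∂μ ≤ 1 :=
      sum_setIntegral_le hμ ℳ hℳdisj hf₁ hnorm
    have h4 : 0 ≤ ∑ J ∈ ℳ, ∫ x in J.toSet, f₁' x ∂μ :=
      Finset.sum_nonneg (fun J _ => integral_nonneg (fun x => abs_nonneg _))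
    calc ∑ J ∈ ℳ, muR μ J + ∑ K ∈ 𝒜c, muR μ K.1
        ≤ ∑ J ∈ ℳ, c₁/s * ∫ x in J.toSet, f₁' x ∂μ
          + ∑ J' ∈ ℳ, (Pn:ℝ) * (c₁/s * ∫ x in J'.toSet, f₁' x ∂μ) := by
          exact add_le_add h2 h1
      _ = (1 + (Pn:ℝ)) * (c₁/s) * ∑ J ∈ ℳ, ∫ x in J.toSet, f₁' x ∂μ := by
          rw [← Finset.sum_add_distrib, Finset.mul_sum]
          apply Finset.sum_congr rfl
          intro J _
          ring
      _ ≤ (1 + (Pn:ℝ)) * (c₁/s) * 1 := by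
          apply mul_le_mul_of_nonneg_left h3 (by positivity)
      _ = (1 + (Pn:ℝ)) * c₁ / s := by ring
  -- ENNReal conversion
  have hμfin : ∀ I : DyadicInterval, μ I.toSet = ENNReal.ofReal (muR μ I) := by
    intro I
    rw [muR, ENNReal.ofReal_toReal (muI_lt_top hμ I).ne]
  have hnn : ∀ I : DyadicInterval, 0 ≤ muR μ I := fun I => ENNReal.toReal_nonneg
  calc μ (⋃ K ∈ 𝒜, K.toSet)
      ≤ μ ((⋃ J ∈ ℳ, J.toSet) ∪ (⋃ K ∈ 𝒜c, K.1.toSet)) := measure_mono hcover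
    _ ≤ μ (⋃ J ∈ ℳ, J.toSet) + μ (⋃ K ∈ 𝒜c, K.1.toSet) := measure_union_le _ _
    _ ≤ (∑ J ∈ ℳ, μ J.toSet) + ∑ K ∈ 𝒜c, μ K.1.toSet := by
        apply add_le_add (measure_biUnion_finset_le _ _) (measure_biUnion_finset_le _ _)
    _ = ENNReal.ofReal (∑ J ∈ ℳ, muR μ J) + ENNReal.ofReal (∑ K ∈ 𝒜c, muR μ K.1) := by
        rw [ENNReal.ofReal_sum_of_nonneg (fun J _ => hnn J),
          ENNReal.ofReal_sum_of_nonneg (fun K _ => hnn K.1)]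
        congr 1 <;> exact Finset.sum_congr rfl (fun I _ => hμfin _)
    _ = ENNReal.ofReal (∑ J ∈ ℳ, muR μ J + ∑ K ∈ 𝒜c, muR μ K.1) :=
        (ENNReal.ofReal_add (Finset.sum_nonneg (fun J _ => hnn J))
          (Finset.sum_nonneg (fun K _ => hnn K.1))).symm
    _ ≤ ENNReal.ofReal ((1 + (Pn:ℝ)) * c₁ / s) := ENNReal.ofReal_le_ofReal hreal

/-- Weak-type estimate for the bad set. -/
lemma badSet_measure_le {s : ℝ} (hs : 0 < s) :
    μ (BadSet μ N f₁ s) ≤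
      ENNReal.ofReal ((1 + (((N+3)^2 * 2^(N+2) : ℕ) : ℝ)) * c^(N+2) / s) := by
  classical
  rw [BadSet]
  rcases isEmpty_or_nonempty {K : DyadicInterval // BadP μ N f₁ s K} with hE | hNE
  · have : ⋃ K ∈ {K : DyadicInterval | BadP μ N f₁ s K}, K.toSet = ∅ := by
      apply Set.eq_empty_iff_forall_notMem.2
      intro x hx
      rw [Set.mem_iUnion₂] at hx
      obtain ⟨K, hK, -⟩ := hx
      exact hE.elim ⟨K, hK⟩
    rw [this]
    simp
  · obtain ⟨e, he⟩ := exists_surjective_nat {K : DyadicInterval // BadP μ N f₁ s K}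
    set Sn : ℕ → Set ℝ := fun n => ⋃ K ∈ (Finset.range (n+1)).image (fun i => (e i).1), K.toSet
      with hSn
    have hmono : Monotone Sn := by
      intro a b hab x hx
      rw [hSn, Set.mem_iUnion₂] at hx ⊢
      obtain ⟨K, hK, hxK⟩ := hx
      rw [Finset.mem_image] at hK
      obtain ⟨i, hi, rfl⟩ := hK
      refine ⟨_, ?_, hxK⟩
      rw [Finset.mem_image]
      refine ⟨i, ?_, rfl⟩
      rw [Finset.mem_range] at hi ⊢
      omega
    have hun : ⋃ K ∈ {K : DyadicInterval | BadP μ N f₁ s K}, K.toSet = ⋃ n, Sn n := by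
      apply Set.Subset.antisymm
      · intro x hx
        rw [Set.mem_iUnion₂] at hx
        obtain ⟨K, hK, hxK⟩ := hx
        obtain ⟨n, hn⟩ := he ⟨K, hK⟩
        rw [Set.mem_iUnion]
        refine ⟨n, ?_⟩
        rw [hSn]
        rw [Set.mem_iUnion₂]
        refine ⟨K, ?_, hxK⟩
        rw [Finset.mem_image]
        exact ⟨n, by simp, by rw [hn]⟩
      · apply Set.iUnion_subset
        intro n
        rw [hSn]
        apply Set.iUnion₂_subset
        intro K hK
        rw [Finset.mem_image] at hK
        obtain ⟨i, -, rfl⟩ := hK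
        intro x hx
        rw [Set.mem_iUnion₂]
        exact ⟨(e i).1, (e i).2, hx⟩
    rw [hun, hmono.measure_iUnion]
    apply iSup_le
    intro n
    apply finite_weak_type hμ hc hbal hf₁ hnorm hs
    intro K hK
    rw [Finset.mem_image] at hK
    obtain ⟨i, -, rfl⟩ := hK
    exact (e i).2

end WeakType

section SmallHelpers

/-- Discrete Cauchy–Schwarz in the form we need. -/
lemma cs_helper {ι : Type*} (F : Finset ι) (a u e : ι → ℝ)
    (he : ∀ i ∈ F, 0 < e i) (ha : ∀ i ∈ F, 0 ≤ a i) (hu : ∀ i ∈ F, 0 ≤ u i) :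
    ∑ i ∈ F, a i * u i ≤
      Real.sqrt (∑ i ∈ F, (a i)^2 * e i) * Real.sqrt (∑ i ∈ F, (u i)^2 / e i) := by
  classical
  have hrw : ∑ i ∈ F, a i * u i
      = ∑ i ∈ F, (a i * Real.sqrt (e i)) * (u i / Real.sqrt (e i)) := by
    apply Finset.sum_congr rfl
    intro i hi
    have hsq : Real.sqrt (e i) ≠ 0 := by
      have := he i hi
      positivity
    field_simp
  rw [hrw]
  have hCS := Finset.sum_mul_sq_le_sq_mul_sq F
    (fun i => a i * Real.sqrt (e i)) (fun i => u i / Real.sqrt (e i))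
  have hnn : 0 ≤ ∑ i ∈ F, (a i * Real.sqrt (e i)) * (u i / Real.sqrt (e i)) := by
    apply Finset.sum_nonneg
    intro i hi
    have h1 := ha i hi
    have h2 := hu i hi
    have h3 := (he i hi).le
    positivity
  have h1 : ∀ i ∈ F, (a i * Real.sqrt (e i))^2 = (a i)^2 * e i := by
    intro i hi
    rw [mul_pow, Real.sq_sqrt (he i hi).le]
  have h2 : ∀ i ∈ F, (u i / Real.sqrt (e i))^2 = (u i)^2 / e i := by
    intro i hi
    rw [div_pow, Real.sq_sqrt (he i hi).le]
  calc ∑ i ∈ F, (a i * Real.sqrt (e i)) * (u i / Real.sqrt (e i))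
      = Real.sqrt ((∑ i ∈ F, (a i * Real.sqrt (e i)) * (u i / Real.sqrt (e i)))^2) :=
        (Real.sqrt_sq hnn).symm
    _ ≤ Real.sqrt ((∑ i ∈ F, (a i * Real.sqrt (e i))^2) * ∑ i ∈ F, (u i / Real.sqrt (e i))^2) :=
        Real.sqrt_le_sqrt hCS
    _ = Real.sqrt (∑ i ∈ F, (a i)^2 * e i) * Real.sqrt (∑ i ∈ F, (u i)^2 / e i) := by
        rw [Real.sqrt_mul (Finset.sum_nonneg (fun i hi => by
          have := he i hi; have := ha i hi; positivity))]
        congr 2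
        · exact Finset.sum_congr rfl h1
        · exact Finset.sum_congr rfl h2

/-- Sandwich a positive number `x ≤ b` between consecutive dyadic multiples of `b`. -/
lemma exists_dyadic_level {x b : ℝ} (hb : 0 < b) (hx0 : 0 < x) (hxb : x ≤ b) :
    ∃ m : ℕ, b * (1/2)^(m+1) < x ∧ x ≤ b * (1/2)^m := by
  classical
  have hex : ∃ n : ℕ, b * (1/2)^(n+1) < x := by
    obtain ⟨n, hn⟩ := exists_pow_lt_of_lt_one (div_pos hx0 hb) (by norm_num : (1:ℝ)/2 < 1)
    refine ⟨n, ?_⟩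
    have h1 : ((1:ℝ)/2)^(n+1) ≤ (1/2)^n := by
      apply pow_le_pow_of_le_one (by norm_num) (by norm_num)
      omega
    calc b * (1/2)^(n+1) ≤ b * (1/2)^n := by
          apply mul_le_mul_of_nonneg_left h1 hb.le
      _ < b * (x / b) := by
          apply mul_lt_mul_of_pos_left hn hb
      _ = x := by field_simp
  set m := Nat.find hex with hm
  refine ⟨m, Nat.find_spec hex, ?_⟩
  rcases Nat.eq_zero_or_pos m with h0 | hpos
  · rw [h0]
    simpa using hxb
  · have hnot := Nat.find_min hex (m := m - 1) (by omega)
    push_neg at hnot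
    calc x ≤ b * (1/2)^(m-1+1) := hnot
      _ = b * (1/2)^m := by congr 1; congr 1; omega

/-- Geometric series bound. -/
lemma geom_half_le (M : ℕ) : ∑ m ∈ Finset.range M, ((1:ℝ)/2)^m ≤ 2 := by
  have := sum_geometric_two_le M
  simpa [one_div] using this

end SmallHelpers

section DdistHelper

open DyadicInterval

lemma exists_rep_of_ddist_le {J K : DyadicInterval} {N : ℕ}
    (h : ddist J K ≤ (N : ℕ∞) + 2) :
    ∃ s t : ℕ, s ≤ N+2 ∧ t ≤ N+2 ∧ J.ancestor s = K.ancestor t := by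
  by_contra hno
  push_neg at hno
  have hlow : ((N:ℕ∞) + 3) ≤ ddist J K := by
    rw [ddist]
    apply le_iInf₂
    intro p hp
    by_cases hle : p.1 + p.2 ≤ N + 2
    · exfalso
      exact hno p.1 p.2 (by omega) (by omega) hp
    · have : N + 3 ≤ p.1 + p.2 := by omega
      calc ((N:ℕ∞) + 3) = ((N + 3 : ℕ) : ℕ∞) := by push_cast; ring
        _ ≤ ((p.1 + p.2 : ℕ) : ℕ∞) := by exact_mod_cast this
  have : ((N:ℕ∞) + 3) ≤ (N:ℕ∞) + 2 := le_trans hlow h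
  have hfin : ((N:ℕ∞) + 3) ≤ ((N:ℕ∞) + 2) → False := by
    intro hh
    have h1 : ((N + 3 : ℕ) : ℕ∞) ≤ ((N + 2 : ℕ) : ℕ∞) := by push_cast at hh ⊢; exact_mod_cast hh
    rw [Nat.cast_le] at h1
    omega
  exact hfin this

end DdistHelper


section KeySum

open DyadicInterval

/-- Auxiliary: sum of measures of intersections with `G'` over disjoint dyadic intervals. -/
lemma sum_inter_le {μ : Measure ℝ} (hμ : GoodMeasure μ) (ℳ : Finset DyadicInterval)
    (hdisj : ((ℳ : Set DyadicInterval)).Pairwise (fun J J' => Disjoint J.toSet J'.toSet))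
    {G' : Set ℝ} (hG'meas : MeasurableSet G') (hG'fin : μ G' < ⊤) :
    ∑ K ∈ ℳ, (μ (K.toSet ∩ G')).toReal ≤ (μ G').toReal := by
  have hfin : ∀ K ∈ ℳ, μ (K.toSet ∩ G') ≠ ⊤ := by
    intro K _
    exact (lt_of_le_of_lt (measure_mono Set.inter_subset_left) (muI_lt_top hμ K)).ne
  rw [← ENNReal.toReal_sum hfin]
  apply ENNReal.toReal_mono hG'fin.ne
  rw [← measure_biUnion_finset]
  · apply measure_mono
    apply Set.iUnion₂_subset
    intro K _
    exact Set.inter_subset_right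
  · intro K hK K' hK' hne
    exact Set.disjoint_of_subset Set.inter_subset_left Set.inter_subset_left
      (hdisj hK hK' hne)
  · exact fun K _ => (measurableSet_toSet K).inter hG'meas

set_option maxHeartbeats 2000000 in
lemma key_sum {μ : Measure ℝ} (hμ : GoodMeasure μ) {c : ℝ} (hc : 1 ≤ c)
    (hbal : ∀ I : DyadicInterval,
      c⁻¹ * mBal μ I.parent ≤ mBal μ I ∧ mBal μ I ≤ c * mBal μ I.parent)
    {N : ℕ} {f₁ : ℝ → ℝ} (hf₁ : Integrable f₁ μ) (hnorm : (∫ x, |f₁ x| ∂μ) ≤ 1)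
    {η : ℝ} (hη : 0 < η) (hη1 : η < 1)
    {S : Set DyadicInterval} {E : DyadicInterval → Set ℝ}
    (hEmeas : ∀ I ∈ S, MeasurableSet (E I)) (hEsub : ∀ I ∈ S, E I ⊆ I.toSet)
    (hElow : ∀ I ∈ S, ENNReal.ofReal (η * muR μ I) ≤ μ (E I))
    (hEdisj : S.PairwiseDisjoint E)
    {G' : Set ℝ} (hG'meas : MeasurableSet G') (hG'fin : μ G' < ⊤)
    {lam : ℝ} (hlam : 0 < lam)
    (hclean : ∀ K : DyadicInterval, μ (K.toSet ∩ G') ≠ 0 → ¬ BadP μ N f₁ lam K)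
    {f₂ : ℝ → ℝ} (hf₂ : ∀ x, |f₂ x| ≤ G'.indicator (fun _ => (1:ℝ)) x)
    (F : Finset (DyadicInterval × DyadicInterval))
    (hF : ∀ q ∈ F, q.1 ∈ S ∧ q.2 ∈ S ∧
      ∃ s' t' : ℕ, s' ≤ N+2 ∧ t' ≤ N+2 ∧ q.1.ancestor s' = q.2.ancestor t') :
    ∑ q ∈ F, avg μ q.1 (fun x => |f₁ x|) * avg μ q.2 (fun x => |f₂ x|) *
        Real.sqrt (mBal μ q.1 * mBal μ q.2)
      ≤ (4 * (((N+3)^2 * 2^(N+2) : ℕ) : ℝ) / η) *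
        Real.sqrt ((1 + (((N+3)^2 * 2^(N+2) : ℕ) : ℝ)) * c^(N+2) * lam * (μ G').toReal) := by
  classical
  set Pn : ℕ := (N+3)^2 * 2^(N+2) with hPn
  have hPnR : (0:ℝ) < (Pn:ℝ) := by positivity
  set c₁ : ℝ := c^(N+2) with hc₁
  have hc₁pos : (0:ℝ) < c₁ := by positivity
  set C6 : ℝ := (1 + (Pn:ℝ)) * c₁ with hC6
  have hC6pos : 0 < C6 := by positivity
  set f₁' : ℝ → ℝ := fun x => |f₁ x| with hf₁'
  set f₂' : ℝ → ℝ := fun x => |f₂ x| with hf₂'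
  set uK : DyadicInterval → ℝ := fun K => (μ (K.toSet ∩ G')).toReal with huK
  set eK : DyadicInterval → ℝ := fun K => (μ (E K)).toReal with heK
  have huK_nn : ∀ K, 0 ≤ uK K := fun K => ENNReal.toReal_nonneg
  have huK_le : ∀ K, uK K ≤ muR μ K := fun K =>
    ENNReal.toReal_mono (muI_lt_top hμ K).ne (measure_mono Set.inter_subset_left)
  -- the integral of |f₂| over K is at most u K
  have hint_f₂ : ∀ K : DyadicInterval, ∫ x in K.toSet, f₂' x ∂μ ≤ uK K := by
    intro K
    have hfin : μ.restrict K.toSet G' < ⊤ := by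
      rw [Measure.restrict_apply hG'meas]
      exact lt_of_le_of_lt (measure_mono Set.inter_subset_right) (muI_lt_top hμ K)
    have hind : Integrable (G'.indicator (fun _ => (1:ℝ))) (μ.restrict K.toSet) := by
      rw [integrable_indicator_iff hG'meas]
      exact integrableOn_const hfin.ne
    have h1 : ∫ x in K.toSet, f₂' x ∂μ ≤ ∫ x in K.toSet, G'.indicator (fun _ => (1:ℝ)) x ∂μ := by
      apply integral_mono_of_nonneg
      · exact Filter.Eventually.of_forall (fun x => abs_nonneg _)
      · exact hind
      · exact Filter.Eventually.of_forall (fun x => hf₂ x)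
    have h2 : ∫ x in K.toSet, G'.indicator (fun _ => (1:ℝ)) x ∂μ = uK K := by
      rw [integral_indicator hG'meas]
      rw [setIntegral_const]
      rw [Measure.real, Measure.restrict_apply hG'meas]
      rw [smul_eq_mul, mul_one, huK, Set.inter_comm]
    rw [h2] at h1
    exact h1
  -- positive terms only
  set term : (DyadicInterval × DyadicInterval) → ℝ := fun q =>
    avg μ q.1 f₁' * avg μ q.2 f₂' * Real.sqrt (mBal μ q.1 * mBal μ q.2) with hterm
  set F₂ : Finset (DyadicInterval × DyadicInterval) :=
    F.filter (fun q => 0 < uK q.2 ∧ 0 < avg μ q.1 f₁') with hF₂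
  have havg₁nn : ∀ J, 0 ≤ avg μ J f₁' := fun J => avg_nonneg_abs hμ J f₁
  have havg₂nn : ∀ K, 0 ≤ avg μ K f₂' := fun K => avg_nonneg_abs hμ K f₂
  have hsum_eq : ∑ q ∈ F, term q = ∑ q ∈ F₂, term q := by
    rw [hF₂]
    apply (Finset.sum_filter_of_ne ?_).symm
    intro q hq hne
    constructor
    · rcases lt_or_eq_of_le (huK_nn q.2) with h | h
      · exact h
      · exfalso
        apply hne
        have hi0 : ∫ x in q.2.toSet, f₂' x ∂μ = 0 := by
          apply le_antisymm
          · calc ∫ x in q.2.toSet, f₂' x ∂μ ≤ uK q.2 := hint_f₂ q.2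
              _ = 0 := h.symm
          · exact integral_nonneg (fun x => abs_nonneg _)
        simp only [hterm]
        rw [show avg μ q.2 f₂' = 0 by rw [avg, hi0, mul_zero]]
        ring
    · rcases lt_or_eq_of_le (havg₁nn q.1) with h | h
      · exact h
      · exfalso
        apply hne
        simp only [hterm]
        rw [← h]
        ring
  rw [hsum_eq]
  -- average of f₂ bound
  have havg₂ : ∀ K : DyadicInterval, avg μ K f₂' ≤ (muR μ K)⁻¹ * uK K := by
    intro K
    rw [avg]
    exact mul_le_mul_of_nonneg_left (hint_f₂ K) (inv_nonneg.2 (muR_pos hμ K).le)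
  have hsqrt_nn : ∀ (J K : DyadicInterval), 0 ≤ Real.sqrt (mBal μ J * mBal μ K) :=
    fun J K => Real.sqrt_nonneg _
  set val : (DyadicInterval × DyadicInterval) → ℝ := fun q =>
    avg μ q.1 f₁' * Real.sqrt (mBal μ q.1 * mBal μ q.2) with hval
  have hval_nn : ∀ q, 0 ≤ val q := fun q => mul_nonneg (havg₁nn q.1) (hsqrt_nn _ _)
  have hval_pos : ∀ q ∈ F₂, 0 < val q := by
    intro q hq
    rw [hF₂, Finset.mem_filter] at hq
    apply mul_pos hq.2.2
    apply Real.sqrt_pos.2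
    exact mul_pos (mBal_pos hμ q.1) (mBal_pos hμ q.2)
  -- the λ bound on pairs
  have hpair : ∀ q ∈ F₂, val q ≤ lam * muR μ q.2 := by
    intro q hq
    rw [hF₂, Finset.mem_filter] at hq
    by_contra hgt
    push_neg at hgt
    have hne0 : μ (q.2.toSet ∩ G') ≠ 0 := by
      intro h0
      have h1 := hq.2.1
      simp only [huK] at h1
      rw [h0] at h1
      simp at h1
    exact hclean q.2 hne0 ⟨q.1, (hF q hq.1).2.2, hgt⟩
  -- fiber structure over the second coordinate
  set 𝒦 : Finset DyadicInterval := F₂.image Prod.snd with h𝒦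
  have h𝒦S : ∀ K ∈ 𝒦, K ∈ S := by
    intro K hK
    rw [h𝒦, Finset.mem_image] at hK
    obtain ⟨q, hq, rfl⟩ := hK
    exact (hF q (Finset.filter_subset _ _ hq)).2.1
  set fib : DyadicInterval → Finset (DyadicInterval × DyadicInterval) :=
    fun K => F₂.filter (fun q => q.2 = K) with hfib
  set W : DyadicInterval → ℝ := fun K => ∑ q ∈ fib K, val q with hW
  have hW_nn : ∀ K, 0 ≤ W K := fun K => Finset.sum_nonneg (fun q _ => hval_nn q)
  have hdecomp : ∑ q ∈ F₂, term q = ∑ K ∈ 𝒦, ∑ q ∈ fib K, term q :=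
    (Finset.sum_fiberwise_of_maps_to (fun q hq => Finset.mem_image_of_mem Prod.snd hq) term).symm
  have hinner : ∀ K ∈ 𝒦, ∑ q ∈ fib K, term q ≤ W K * ((muR μ K)⁻¹ * uK K) := by
    intro K hK
    have h1 : ∑ q ∈ fib K, term q = W K * avg μ K f₂' := by
      rw [hW, Finset.sum_mul]
      apply Finset.sum_congr rfl
      intro q hq
      rw [hfib, Finset.mem_filter] at hq
      simp only [hterm, hval]
      rw [hq.2]
      ring
    rw [h1]
    exact mul_le_mul_of_nonneg_left (havg₂ K) (hW_nn K)
  have hcard : ∀ K, (fib K).card ≤ Pn := by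
    intro K
    have hinj : Set.InjOn Prod.fst ((fib K) : Set (DyadicInterval × DyadicInterval)) := by
      intro a ha b hb hab
      rw [Finset.mem_coe, hfib, Finset.mem_filter] at ha hb
      exact Prod.ext hab (ha.2.trans hb.2.symm)
    have himg : ((fib K).image Prod.fst).card = (fib K).card :=
      Finset.card_image_of_injOn hinj
    rw [← himg, hPn]
    apply card_cousins_le _ K (N+2)
    intro J hJ
    rw [Finset.mem_image] at hJ
    obtain ⟨q, hq, rfl⟩ := hJ
    rw [hfib, Finset.mem_filter] at hq
    obtain ⟨s', t', hs', ht', heq⟩ := (hF q (Finset.filter_subset _ _ hq.1)).2.2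
    exact ⟨s', t', hs', ht', by rw [← hq.2]; exact heq⟩
  have hW_le : ∀ K ∈ 𝒦, W K ≤ (Pn:ℝ) * (lam * muR μ K) := by
    intro K hK
    have hb : ∀ q ∈ fib K, val q ≤ lam * muR μ K := by
      intro q hq
      rw [hfib, Finset.mem_filter] at hq
      have := hpair q hq.1
      rw [hq.2] at this
      exact this
    calc W K ≤ (fib K).card • (lam * muR μ K) := Finset.sum_le_card_nsmul _ _ _ hb
      _ = ((fib K).card : ℝ) * (lam * muR μ K) := nsmul_eq_mul _ _
      _ ≤ (Pn:ℝ) * (lam * muR μ K) := by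
          apply mul_le_mul_of_nonneg_right _ (mul_nonneg hlam.le (muR_pos hμ K).le)
          exact_mod_cast hcard K
  have hW_pos : ∀ K ∈ 𝒦, 0 < W K := by
    intro K hK
    rw [h𝒦, Finset.mem_image] at hK
    obtain ⟨q, hq, rfl⟩ := hK
    have hqfib : q ∈ fib q.2 := by
      rw [hfib, Finset.mem_filter]
      exact ⟨hq, rfl⟩
    calc (0:ℝ) < val q := hval_pos q hq
      _ ≤ W q.2 := Finset.single_le_sum (fun r _ => hval_nn r) hqfib
  -- g = W/μ and e
  set gK : DyadicInterval → ℝ := fun K => W K / muR μ K with hgK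
  have hg_pos : ∀ K ∈ 𝒦, 0 < gK K := fun K hK => div_pos (hW_pos K hK) (muR_pos hμ K)
  have hg_le : ∀ K ∈ 𝒦, gK K ≤ (Pn:ℝ) * lam := by
    intro K hK
    rw [hgK, div_le_iff₀ (muR_pos hμ K)]
    calc W K ≤ (Pn:ℝ) * (lam * muR μ K) := hW_le K hK
      _ = (Pn:ℝ) * lam * muR μ K := by ring
  have heK_ge : ∀ K ∈ 𝒦, η * muR μ K ≤ eK K := by
    intro K hK
    have hfin : μ (E K) ≠ ⊤ :=
      (lt_of_le_of_lt (measure_mono (hEsub K (h𝒦S K hK))) (muI_lt_top hμ K)).ne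
    have h1 := hElow K (h𝒦S K hK)
    rw [heK]
    exact (ENNReal.ofReal_le_iff_le_toReal hfin).1 h1
  have heK_pos : ∀ K ∈ 𝒦, 0 < eK K := by
    intro K hK
    calc (0:ℝ) < η * muR μ K := mul_pos hη (muR_pos hμ K)
      _ ≤ eK K := heK_ge K hK
  -- the K for which u is positive
  have huK_pos : ∀ K ∈ 𝒦, 0 < uK K := by
    intro K hK
    rw [h𝒦, Finset.mem_image] at hK
    obtain ⟨q, hq, rfl⟩ := hK
    rw [hF₂, Finset.mem_filter] at hq
    exact hq.2.1
  -- FACTOR 1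
  have hFactor1 : ∑ K ∈ 𝒦, (gK K)^2 * eK K ≤ 4 * (Pn:ℝ)^2 * lam * C6 := by
    have hex : ∀ K : {x // x ∈ 𝒦}, ∃ m : ℕ,
        (Pn:ℝ)*lam*(1/2)^(m+1) < gK K.1 ∧ gK K.1 ≤ (Pn:ℝ)*lam*(1/2)^m := by
      intro K
      exact exists_dyadic_level (by positivity) (hg_pos K.1 K.2) (hg_le K.1 K.2)
    choose mf hmf1 hmf2 using hex
    set M : ℕ := 𝒦.attach.sup mf + 1 with hM
    have hmaps : ∀ K ∈ 𝒦.attach, mf K ∈ Finset.range M := by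
      intro K hK
      rw [Finset.mem_range, hM]
      exact Nat.lt_succ_of_le (Finset.le_sup hK)
    have hsum : ∑ K ∈ 𝒦, (gK K)^2 * eK K = ∑ K ∈ 𝒦.attach, (gK K.1)^2 * eK K.1 :=
      (Finset.sum_attach _ _).symm
    rw [hsum, ← Finset.sum_fiberwise_of_maps_to hmaps (fun K => (gK K.1)^2 * eK K.1)]
    have hperfiber : ∀ m ∈ Finset.range M,
        ∑ K ∈ 𝒦.attach.filter (fun K => mf K = m), (gK K.1)^2 * eK K.1
          ≤ (2 * (Pn:ℝ)^2 * lam * C6) * (1/2)^m := by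
      intro m _
      set lv : ℝ := lam * (1/2)^(m+1) with hlv
      have hlvpos : 0 < lv := by positivity
      -- every K in this fiber is lv-bad
      have hbadfib : ∀ K ∈ 𝒦.attach.filter (fun K => mf K = m), BadP μ N f₁ lv K.1 := by
        intro K hK
        rw [Finset.mem_filter] at hK
        have h1 : (Pn:ℝ) * lv < gK K.1 := by
          have := hmf1 K
          rw [hK.2] at this
          calc (Pn:ℝ) * lv = (Pn:ℝ)*lam*(1/2)^(m+1) := by rw [hlv]; ring
            _ < gK K.1 := this
        have h2 : (Pn:ℝ) * lv * muR μ K.1 < W K.1 := by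
          rw [hgK] at h1
          calc (Pn:ℝ) * lv * muR μ K.1 < W K.1 / muR μ K.1 * muR μ K.1 := by
                apply mul_lt_mul_of_pos_right h1 (muR_pos hμ K.1)
            _ = W K.1 := div_mul_cancel₀ _ (muR_pos hμ K.1).ne'
        have h3 : ∃ q ∈ fib K.1, lv * muR μ K.1 < val q := by
          by_contra hall
          push_neg at hall
          have : W K.1 ≤ (fib K.1).card • (lv * muR μ K.1) :=
            Finset.sum_le_card_nsmul _ _ _ (fun q hq => hall q hq)
          rw [nsmul_eq_mul] at this
          have hcc : ((fib K.1).card : ℝ) ≤ (Pn:ℝ) := by exact_mod_cast hcard K.1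
          have hlm : (0:ℝ) ≤ lv * muR μ K.1 := (mul_pos hlvpos (muR_pos hμ K.1)).le
          have h5 : ((fib K.1).card : ℝ) * (lv * muR μ K.1) ≤ (Pn:ℝ) * (lv * muR μ K.1) :=
            mul_le_mul_of_nonneg_right hcc hlm
          have h6 : (Pn:ℝ) * (lv * muR μ K.1) = (Pn:ℝ) * lv * muR μ K.1 := by ring
          linarith
        obtain ⟨q, hq, hqval⟩ := h3
        rw [hfib, Finset.mem_filter] at hq
        obtain ⟨s', t', hs', ht', heq⟩ := (hF q (Finset.filter_subset _ _ hq.1)).2.2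
        refine ⟨q.1, ⟨s', t', hs', ht', by rw [← hq.2]; exact heq⟩, ?_⟩
        simp only [hval] at hqval
        rw [show mBal μ q.2 = mBal μ K.1 from by rw [hq.2]] at hqval
        exact hqval
      -- sum of e over the fiber is controlled by the bad set
      have hesum : ∑ K ∈ 𝒦.attach.filter (fun K => mf K = m), eK K.1 ≤ C6 / lv := by
        set fibim : Finset DyadicInterval :=
          (𝒦.attach.filter (fun K => mf K = m)).image Subtype.val with hfibim
        have hsame : ∑ K ∈ 𝒦.attach.filter (fun K => mf K = m), eK K.1
            = ∑ K ∈ fibim, eK K := by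
          rw [hfibim]
          exact (Finset.sum_image (f := eK) (g := Subtype.val)
            (fun a _ b _ hab => Subtype.ext hab)).symm
        rw [hsame]
        have hEfin : ∀ K ∈ fibim, μ (E K) ≠ ⊤ := by
          intro K hK
          rw [hfibim, Finset.mem_image] at hK
          obtain ⟨Ka, hKa, rfl⟩ := hK
          exact (lt_of_le_of_lt (measure_mono (hEsub _ (h𝒦S _ Ka.2))) (muI_lt_top hμ _)).ne
        have h1 : ∑ K ∈ fibim, eK K = (∑ K ∈ fibim, μ (E K)).toReal := by
          rw [ENNReal.toReal_sum hEfin]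
        rw [h1]
        have hfibS : ∀ K ∈ fibim, K ∈ S := by
          intro K hK
          rw [hfibim, Finset.mem_image] at hK
          obtain ⟨Ka, _, rfl⟩ := hK
          exact h𝒦S _ Ka.2
        have h2 : ∑ K ∈ fibim, μ (E K) = μ (⋃ K ∈ fibim, E K) := by
          rw [measure_biUnion_finset]
          · intro K hK K' hK' hne
            exact hEdisj (hfibS K (Finset.mem_coe.1 hK)) (hfibS K' (Finset.mem_coe.1 hK')) hne
          · intro K hK
            exact hEmeas _ (hfibS K hK)
        have h3 : μ (⋃ K ∈ fibim, E K) ≤ μ (BadSet μ N f₁ lv) := by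
          apply measure_mono
          apply Set.iUnion₂_subset
          intro K hK
          rw [hfibim, Finset.mem_image] at hK
          obtain ⟨Ka, hKa, rfl⟩ := hK
          refine Set.Subset.trans (hEsub _ (h𝒦S _ Ka.2)) ?_
          exact subset_badSet μ N f₁ (hbadfib Ka hKa)
        have h4 : μ (BadSet μ N f₁ lv) ≤ ENNReal.ofReal (C6 / lv) := by
          have hh := badSet_measure_le (N := N) hμ hc hbal hf₁ hnorm hlvpos
          rw [hC6, hc₁, hPn]
          exact hh
        rw [h2]
        calc (μ (⋃ K ∈ fibim, E K)).toReal ≤ (ENNReal.ofReal (C6/lv)).toReal := by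
              apply ENNReal.toReal_mono ENNReal.ofReal_ne_top (le_trans h3 h4)
          _ = C6 / lv := ENNReal.toReal_ofReal (by positivity)
      -- combine
      have hgb : ∀ K ∈ 𝒦.attach.filter (fun K => mf K = m),
          (gK K.1)^2 * eK K.1 ≤ ((Pn:ℝ)*lam*(1/2)^m)^2 * eK K.1 := by
        intro K hK
        rw [Finset.mem_filter] at hK
        apply mul_le_mul_of_nonneg_right _ (heK_pos K.1 K.2).le
        apply pow_le_pow_left₀ (hg_pos K.1 K.2).le
        have := hmf2 K
        rw [hK.2] at this
        exact this
      have halg : ((Pn:ℝ)*lam*(1/2)^m)^2 * (C6/lv) = (2*(Pn:ℝ)^2*lam*C6) * (1/2)^m := by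
        have hm0 : ((1:ℝ)/2)^m ≠ 0 := by positivity
        rw [hlv, pow_succ]
        field_simp
        ring
      calc ∑ K ∈ 𝒦.attach.filter (fun K => mf K = m), (gK K.1)^2 * eK K.1
          ≤ ∑ K ∈ 𝒦.attach.filter (fun K => mf K = m), ((Pn:ℝ)*lam*(1/2)^m)^2 * eK K.1 :=
            Finset.sum_le_sum hgb
        _ = ((Pn:ℝ)*lam*(1/2)^m)^2 * ∑ K ∈ 𝒦.attach.filter (fun K => mf K = m), eK K.1 :=
            (Finset.mul_sum _ _ _).symm
        _ ≤ ((Pn:ℝ)*lam*(1/2)^m)^2 * (C6/lv) := by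
            apply mul_le_mul_of_nonneg_left hesum (sq_nonneg _)
        _ = (2*(Pn:ℝ)^2*lam*C6) * (1/2)^m := halg
    calc ∑ m ∈ Finset.range M, ∑ K ∈ 𝒦.attach.filter (fun K => mf K = m), (gK K.1)^2 * eK K.1
        ≤ ∑ m ∈ Finset.range M, (2*(Pn:ℝ)^2*lam*C6) * (1/2)^m :=
          Finset.sum_le_sum hperfiber
      _ = (2*(Pn:ℝ)^2*lam*C6) * ∑ m ∈ Finset.range M, ((1:ℝ)/2)^m :=
          (Finset.mul_sum _ _ _).symm
      _ ≤ (2*(Pn:ℝ)^2*lam*C6) * 2 := by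
          apply mul_le_mul_of_nonneg_left (geom_half_le M) (by positivity)
      _ = 4 * (Pn:ℝ)^2 * lam * C6 := by ring
  -- FACTOR 2
  have hFactor2 : ∑ K ∈ 𝒦, (uK K)^2 / eK K ≤ 4 / η^2 * (μ G').toReal := by
    have hstep1 : ∑ K ∈ 𝒦, (uK K)^2 / eK K ≤ ∑ K ∈ 𝒦, 1/η * ((uK K)^2 / muR μ K) := by
      apply Finset.sum_le_sum
      intro K hK
      have h1 : (uK K)^2 / eK K ≤ (uK K)^2 / (η * muR μ K) := by
        apply div_le_div_of_nonneg_left (sq_nonneg _) (mul_pos hη (muR_pos hμ K)) (heK_ge K hK)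
      calc (uK K)^2 / eK K ≤ (uK K)^2 / (η * muR μ K) := h1
        _ = 1/η * ((uK K)^2 / muR μ K) := by
            field_simp
    have hstep2 : ∑ K ∈ 𝒦, (uK K)^2 / muR μ K ≤ 4/η * (μ G').toReal := by
      have hex : ∀ K : {x // x ∈ 𝒦}, ∃ n : ℕ,
          (1:ℝ)*(1/2)^(n+1) < uK K.1 / muR μ K.1 ∧ uK K.1 / muR μ K.1 ≤ (1:ℝ)*(1/2)^n := by
        intro K
        apply exists_dyadic_level one_pos
        · exact div_pos (huK_pos K.1 K.2) (muR_pos hμ K.1)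
        · rw [div_le_one (muR_pos hμ K.1)]
          exact huK_le K.1
      choose nf hnf1 hnf2 using hex
      set M2 : ℕ := 𝒦.attach.sup nf + 1 with hM2
      have hmaps : ∀ K ∈ 𝒦.attach, nf K ∈ Finset.range M2 := by
        intro K hK
        rw [Finset.mem_range, hM2]
        exact Nat.lt_succ_of_le (Finset.le_sup hK)
      have hsum : ∑ K ∈ 𝒦, (uK K)^2 / muR μ K = ∑ K ∈ 𝒦.attach, (uK K.1)^2 / muR μ K.1 :=
        (Finset.sum_attach _ _).symm
      rw [hsum, ← Finset.sum_fiberwise_of_maps_to hmaps (fun K => (uK K.1)^2 / muR μ K.1)]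
      have hperfiber : ∀ n ∈ Finset.range M2,
          ∑ K ∈ 𝒦.attach.filter (fun K => nf K = n), (uK K.1)^2 / muR μ K.1
            ≤ (2/η * (μ G').toReal) * (1/2)^n := by
        intro n _
        set fibim : Finset DyadicInterval :=
          (𝒦.attach.filter (fun K => nf K = n)).image Subtype.val with hfibim
        have hmemfib : ∀ K ∈ fibim, K ∈ 𝒦 ∧ (1:ℝ)*(1/2)^(n+1) < uK K / muR μ K ∧
            uK K / muR μ K ≤ (1:ℝ)*(1/2)^n := by
          intro K hK
          rw [hfibim, Finset.mem_image] at hK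
          obtain ⟨Ka, hKa, rfl⟩ := hK
          rw [Finset.mem_filter] at hKa
          refine ⟨Ka.2, ?_, ?_⟩
          · have := hnf1 Ka; rw [hKa.2] at this; exact this
          · have := hnf2 Ka; rw [hKa.2] at this; exact this
        have hsame : ∑ K ∈ 𝒦.attach.filter (fun K => nf K = n), (uK K.1)^2 / muR μ K.1
            = ∑ K ∈ fibim, (uK K)^2 / muR μ K := by
          rw [hfibim]
          exact (Finset.sum_image (f := fun K => (uK K)^2 / muR μ K) (g := Subtype.val)
            (fun a _ b _ hab => Subtype.ext hab)).symm
        rw [hsame]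
        -- pointwise : u²/μ ≤ (1/2)^n * u
        have hptw : ∀ K ∈ fibim, (uK K)^2 / muR μ K ≤ (1/2)^n * uK K := by
          intro K hK
          obtain ⟨hK𝒦, -, h2⟩ := hmemfib K hK
          have hμpos := muR_pos hμ K
          have : (uK K)^2 / muR μ K = (uK K / muR μ K) * uK K := by
            field_simp
          rw [this]
          apply mul_le_mul_of_nonneg_right _ (huK_nn K)
          calc uK K / muR μ K ≤ (1:ℝ)*(1/2)^n := h2
            _ = (1/2)^n := one_mul _
        -- sum of u over fiber
        have husum : ∑ K ∈ fibim, uK K ≤ 2/η * (μ G').toReal := by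
          have h1 : ∀ K ∈ fibim, uK K ≤ (1/2)^n * muR μ K := by
            intro K hK
            obtain ⟨hK𝒦, -, h2⟩ := hmemfib K hK
            have hμpos := muR_pos hμ K
            rwa [one_mul, div_le_iff₀ hμpos] at h2
          have h2 : ∀ K ∈ fibim, muR μ K ≤ 1/η * eK K := by
            intro K hK
            obtain ⟨hK𝒦, -, -⟩ := hmemfib K hK
            have h := heK_ge K hK𝒦
            have heq : muR μ K = 1/η * (η * muR μ K) := by field_simp
            rw [heq]
            apply mul_le_mul_of_nonneg_left h (by positivity)
          have hEfin : ∀ K ∈ fibim, μ (E K) ≠ ⊤ := by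
            intro K hK
            obtain ⟨hK𝒦, -, -⟩ := hmemfib K hK
            exact (lt_of_le_of_lt (measure_mono (hEsub _ (h𝒦S _ hK𝒦))) (muI_lt_top hμ _)).ne
          have hUfin : μ (⋃ K ∈ fibim, K.toSet) < ⊤ := by
            apply lt_of_le_of_lt (measure_biUnion_finset_le _ _)
            rw [ENNReal.sum_lt_top]
            exact fun K _ => muI_lt_top hμ K
          have h3 : ∑ K ∈ fibim, eK K ≤ (μ (⋃ K ∈ fibim, K.toSet)).toReal := by
            have e1 : ∑ K ∈ fibim, eK K = (∑ K ∈ fibim, μ (E K)).toReal :=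
              (ENNReal.toReal_sum hEfin).symm
            rw [e1]
            apply ENNReal.toReal_mono hUfin.ne
            rw [← measure_biUnion_finset]
            · apply measure_mono
              apply Set.iUnion₂_mono
              intro K hK
              exact hEsub _ (h𝒦S _ (hmemfib K hK).1)
            · intro K hK K' hK' hne
              exact hEdisj (h𝒦S _ (hmemfib K (Finset.mem_coe.1 hK)).1)
                (h𝒦S _ (hmemfib K' (Finset.mem_coe.1 hK')).1) hne
            · exact fun K hK => hEmeas _ (h𝒦S _ (hmemfib K hK).1)
          -- maximal cover
          obtain ⟨ℳ, hℳsub, hℳdisj, hℳcover⟩ := DyadicInterval.exists_maximal_cover fibim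
          have h4 : (μ (⋃ K ∈ fibim, K.toSet)).toReal ≤ ∑ K ∈ ℳ, muR μ K := by
            have hsub : (⋃ K ∈ fibim, K.toSet) ⊆ ⋃ K ∈ ℳ, K.toSet := by
              apply Set.iUnion₂_subset
              intro K hK
              obtain ⟨K', hK', hsub⟩ := hℳcover K hK
              exact Set.subset_biUnion_of_mem hK' |>.trans' hsub
            have hfin2 : ∀ K ∈ ℳ, μ K.toSet ≠ ⊤ := fun K _ => (muI_lt_top hμ K).ne
            calc (μ (⋃ K ∈ fibim, K.toSet)).toReal
                ≤ ((∑ K ∈ ℳ, μ K.toSet)).toReal := by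
                  apply ENNReal.toReal_mono
                  · exact (ENNReal.sum_lt_top.2 (fun K _ => muI_lt_top hμ K)).ne
                  · exact le_trans (measure_mono hsub) (measure_biUnion_finset_le _ _)
              _ = ∑ K ∈ ℳ, muR μ K := ENNReal.toReal_sum hfin2
          have h5 : ∑ K ∈ ℳ, muR μ K ≤ 2^(n+1) * ∑ K ∈ ℳ, uK K := by
            rw [Finset.mul_sum]
            apply Finset.sum_le_sum
            intro K hK
            obtain ⟨-, hlow, -⟩ := hmemfib K (hℳsub hK)
            have hμpos := muR_pos hμ K
            rw [one_mul, lt_div_iff₀ hμpos] at hlow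
            have hmul := mul_le_mul_of_nonneg_left hlow.le
              (show (0:ℝ) ≤ 2^(n+1) by positivity)
            calc muR μ K = (2^(n+1) * (1/2)^(n+1)) * muR μ K := by
                  rw [show (2:ℝ)^(n+1)*(1/2)^(n+1) = 1 from by rw [← mul_pow]; norm_num]
                  ring
              _ = 2^(n+1) * ((1/2)^(n+1) * muR μ K) := by ring
              _ ≤ 2^(n+1) * uK K := hmul
          have h6 : ∑ K ∈ ℳ, uK K ≤ (μ G').toReal := by
            simp only [huK]
            exact sum_inter_le hμ ℳ hℳdisj hG'meas hG'fin
          have h7 : ∑ K ∈ fibim, uK K ≤ (1/2)^n * ∑ K ∈ fibim, muR μ K := by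
            rw [Finset.mul_sum]
            exact Finset.sum_le_sum h1
          have h8 : ∑ K ∈ fibim, muR μ K ≤ 1/η * ∑ K ∈ fibim, eK K := by
            rw [Finset.mul_sum]
            exact Finset.sum_le_sum h2
          have hpow : ((1:ℝ)/2)^n * 2^(n+1) = 2 := by
            have : ((1:ℝ)/2)^n * 2^n = 1 := by rw [← mul_pow]; norm_num
            rw [pow_succ]
            nlinarith [this]
          have hGnn : (0:ℝ) ≤ (μ G').toReal := ENNReal.toReal_nonneg
          have hchain : ∑ K ∈ fibim, uK K ≤ (1/2)^n * (1/η * (2^(n+1) * (μ G').toReal)) := by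
            calc ∑ K ∈ fibim, uK K ≤ (1/2)^n * ∑ K ∈ fibim, muR μ K := h7
              _ ≤ (1/2)^n * (1/η * ∑ K ∈ fibim, eK K) := by
                  apply mul_le_mul_of_nonneg_left _ (by positivity)
                  exact h8
              _ ≤ (1/2)^n * (1/η * (μ (⋃ K ∈ fibim, K.toSet)).toReal) := by
                  apply mul_le_mul_of_nonneg_left _ (by positivity)
                  apply mul_le_mul_of_nonneg_left h3 (by positivity)
              _ ≤ (1/2)^n * (1/η * (∑ K ∈ ℳ, muR μ K)) := by
                  apply mul_le_mul_of_nonneg_left _ (by positivity)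
                  apply mul_le_mul_of_nonneg_left h4 (by positivity)
              _ ≤ (1/2)^n * (1/η * (2^(n+1) * ∑ K ∈ ℳ, uK K)) := by
                  apply mul_le_mul_of_nonneg_left _ (by positivity)
                  apply mul_le_mul_of_nonneg_left h5 (by positivity)
              _ ≤ (1/2)^n * (1/η * (2^(n+1) * (μ G').toReal)) := by
                  apply mul_le_mul_of_nonneg_left _ (by positivity)
                  apply mul_le_mul_of_nonneg_left _ (by positivity)
                  apply mul_le_mul_of_nonneg_left h6 (by positivity)
          calc ∑ K ∈ fibim, uK K ≤ (1/2)^n * (1/η * (2^(n+1) * (μ G').toReal)) := hchain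
            _ = ((1/2)^n * 2^(n+1)) * (1/η * (μ G').toReal) := by ring
            _ = 2 * (1/η * (μ G').toReal) := by rw [hpow]
            _ = 2/η * (μ G').toReal := by ring
        calc ∑ K ∈ fibim, (uK K)^2 / muR μ K
            ≤ ∑ K ∈ fibim, (1/2)^n * uK K := Finset.sum_le_sum hptw
          _ = (1/2)^n * ∑ K ∈ fibim, uK K := (Finset.mul_sum _ _ _).symm
          _ ≤ (1/2)^n * (2/η * (μ G').toReal) := by
              apply mul_le_mul_of_nonneg_left husum (by positivity)
          _ = (2/η * (μ G').toReal) * (1/2)^n := by ring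
      calc ∑ n ∈ Finset.range M2, ∑ K ∈ 𝒦.attach.filter (fun K => nf K = n),
            (uK K.1)^2 / muR μ K.1
          ≤ ∑ n ∈ Finset.range M2, (2/η * (μ G').toReal) * (1/2)^n :=
            Finset.sum_le_sum hperfiber
        _ = (2/η * (μ G').toReal) * ∑ n ∈ Finset.range M2, ((1:ℝ)/2)^n :=
            (Finset.mul_sum _ _ _).symm
        _ ≤ (2/η * (μ G').toReal) * 2 := by
            apply mul_le_mul_of_nonneg_left (geom_half_le M2) (by positivity)
        _ = 4/η * (μ G').toReal := by ring
    calc ∑ K ∈ 𝒦, (uK K)^2 / eK K ≤ ∑ K ∈ 𝒦, 1/η * ((uK K)^2 / muR μ K) := hstep1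
      _ = 1/η * ∑ K ∈ 𝒦, (uK K)^2 / muR μ K := (Finset.mul_sum _ _ _).symm
      _ ≤ 1/η * (4/η * (μ G').toReal) := by
          apply mul_le_mul_of_nonneg_left hstep2 (by positivity)
      _ = 4/η^2 * (μ G').toReal := by ring
  -- FINAL assembly
  have hGnn : (0:ℝ) ≤ (μ G').toReal := ENNReal.toReal_nonneg
  have hF1nn : (0:ℝ) ≤ ∑ K ∈ 𝒦, (gK K)^2 * eK K :=
    Finset.sum_nonneg (fun K hK => mul_nonneg (sq_nonneg _) (heK_pos K hK).le)
  calc ∑ q ∈ F₂, term q = ∑ K ∈ 𝒦, ∑ q ∈ fib K, term q := hdecomp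
    _ ≤ ∑ K ∈ 𝒦, gK K * uK K := by
        apply Finset.sum_le_sum
        intro K hK
        apply le_trans (hinner K hK)
        apply le_of_eq
        simp only [hgK]
        rw [div_eq_mul_inv]
        ring
    _ ≤ Real.sqrt (∑ K ∈ 𝒦, (gK K)^2 * eK K) * Real.sqrt (∑ K ∈ 𝒦, (uK K)^2 / eK K) :=
        cs_helper 𝒦 gK uK eK heK_pos (fun K hK => (hg_pos K hK).le) (fun K _ => huK_nn K)
    _ ≤ Real.sqrt (4 * (Pn:ℝ)^2 * lam * C6) * Real.sqrt (4/η^2 * (μ G').toReal) := by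
        apply mul_le_mul (Real.sqrt_le_sqrt hFactor1) (Real.sqrt_le_sqrt hFactor2)
          (Real.sqrt_nonneg _) (Real.sqrt_nonneg _)
    _ = (4 * (Pn:ℝ) / η) * Real.sqrt (C6 * lam * (μ G').toReal) := by
        have e1 : Real.sqrt (4 * (Pn:ℝ)^2 * lam * C6) = 2*(Pn:ℝ) * Real.sqrt (lam * C6) := by
          rw [show 4 * (Pn:ℝ)^2 * lam * C6 = (2*(Pn:ℝ))^2 * (lam*C6) by ring,
            Real.sqrt_mul (sq_nonneg _), Real.sqrt_sq (by positivity)]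
        have e2 : Real.sqrt (4/η^2 * (μ G').toReal) = 2/η * Real.sqrt ((μ G').toReal) := by
          rw [show 4/η^2 * (μ G').toReal = (2/η)^2 * (μ G').toReal by ring,
            Real.sqrt_mul (sq_nonneg _), Real.sqrt_sq (by positivity)]
        rw [e1, e2]
        have e3 : Real.sqrt (lam * C6) * Real.sqrt ((μ G').toReal)
            = Real.sqrt (C6 * lam * (μ G').toReal) := by
          rw [← Real.sqrt_mul (by positivity)]
          congr 1
          ring
        calc 2*(Pn:ℝ) * Real.sqrt (lam * C6) * (2/η * Real.sqrt ((μ G').toReal))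
            = (4 * (Pn:ℝ) / η) * (Real.sqrt (lam * C6) * Real.sqrt ((μ G').toReal)) := by
              ring
          _ = (4 * (Pn:ℝ) / η) * Real.sqrt (C6 * lam * (μ G').toReal) := by rw [e3]

end KeySum

set_option maxHeartbeats 1000000 in
theorem statement10 (μ : Measure ℝ) (hμ : BalancedMeasure μ) (N : ℕ) (η : ℝ)
    (hη : η ∈ Set.Ioo (0 : ℝ) 1) :
    ∃ C > (0 : ℝ), ∀ S : Set DyadicInterval, IsSparse μ η S →
      ∀ f₁ : ℝ → ℝ, Integrable f₁ μ → (∫ x, |f₁ x| ∂μ) ≤ 1 →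
      ∀ G : Set ℝ, MeasurableSet G → 0 < μ G → μ G < ⊤ →
        ∃ G' ⊆ G, MeasurableSet G' ∧ μ G ≤ 2 * μ G' ∧
          ∀ f₂ : ℝ → ℝ, (∀ x, |f₂ x| ≤ G'.indicator (fun _ => (1 : ℝ)) x) →
            formC μ N S (fun x => |f₁ x|) (fun x => |f₂ x|) ≤ C := by
  classical
  obtain ⟨hGood, c, hc, hbal⟩ := hμ
  obtain ⟨hη0, hη1⟩ := hη
  set Pn : ℕ := (N+3)^2 * 2^(N+2) with hPn
  have hPnR : (0:ℝ) < (Pn:ℝ) := by positivity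
  set C6 : ℝ := (1 + (Pn:ℝ)) * c^(N+2) with hC6
  have hcpos : (0:ℝ) < c := lt_of_lt_of_le one_pos hc
  have hC6pos : 0 < C6 := by positivity
  refine ⟨8 * (Pn:ℝ) * C6 / η, by positivity, ?_⟩
  intro S hS f₁ hf₁int hf₁norm G hGmeas hG0 hGtop
  obtain ⟨E, hEmeas, hEsub, hElow, hEdisj⟩ := hS
  set tG : ℝ := (μ G).toReal with htGdef
  have htG : 0 < tG := ENNReal.toReal_pos hG0.ne' hGtop.ne
  set lam : ℝ := 4 * C6 / tG with hlamdef
  have hlam : 0 < lam := by positivity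
  set Bad : Set ℝ := BadSet μ N f₁ lam with hBad
  have hBadmeas : MeasurableSet Bad := badSet_measurable μ N f₁ lam
  set G' : Set ℝ := G \ Bad with hG'
  have hG'meas : MeasurableSet G' := hGmeas.diff hBadmeas
  have hG'fin : μ G' < ⊤ := lt_of_le_of_lt (measure_mono Set.diff_subset) hGtop
  -- the bad set is small
  have hBadle : μ Bad ≤ ENNReal.ofReal (tG/4) := by
    have h1 := badSet_measure_le (N := N) hGood hc hbal hf₁int hf₁norm hlam
    have h2 : (1 + (((N+3)^2 * 2^(N+2) : ℕ) : ℝ)) * c^(N+2) / lam = tG/4 := by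
      rw [hlamdef, hC6, hPn]
      field_simp
    rw [hBad]
    rw [← h2]
    exact h1
  -- μ G ≤ 2 μ G'
  have hsplit : μ (G ∩ Bad) + μ (G \ Bad) = μ G := measure_inter_add_diff G hBadmeas
  have hiBad : (μ (G ∩ Bad)).toReal ≤ tG/4 := by
    have h1 : μ (G ∩ Bad) ≤ ENNReal.ofReal (tG/4) :=
      le_trans (measure_mono Set.inter_subset_right) hBadle
    calc (μ (G ∩ Bad)).toReal ≤ (ENNReal.ofReal (tG/4)).toReal :=
          ENNReal.toReal_mono ENNReal.ofReal_ne_top h1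
      _ = tG/4 := ENNReal.toReal_ofReal (by positivity)
  have hGfin1 : μ (G ∩ Bad) ≠ ⊤ :=
    (lt_of_le_of_lt (measure_mono Set.inter_subset_left) hGtop).ne
  have hGfin2 : μ (G \ Bad) ≠ ⊤ :=
    (lt_of_le_of_lt (measure_mono Set.diff_subset) hGtop).ne
  have htReq : (μ (G ∩ Bad)).toReal + (μ (G \ Bad)).toReal = tG := by
    rw [htGdef, ← hsplit, ENNReal.toReal_add hGfin1 hGfin2]
  have hG'big : tG/2 ≤ (μ G').toReal := by
    rw [hG']
    linarith
  have hmG2 : μ G ≤ 2 * μ G' := by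
    have h1 : μ G = ENNReal.ofReal tG := by
      rw [htGdef, ENNReal.ofReal_toReal hGtop.ne]
    have h2 : μ G' = ENNReal.ofReal ((μ G').toReal) := by
      rw [ENNReal.ofReal_toReal hG'fin.ne]
    rw [h1, h2]
    calc ENNReal.ofReal tG ≤ ENNReal.ofReal (2 * (μ G').toReal) := by
          apply ENNReal.ofReal_le_ofReal
          linarith
      _ = ENNReal.ofReal 2 * ENNReal.ofReal ((μ G').toReal) :=
          ENNReal.ofReal_mul (by norm_num)
      _ = 2 * ENNReal.ofReal ((μ G').toReal) := by
          norm_num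
  refine ⟨G', Set.diff_subset, hG'meas, hmG2, ?_⟩
  intro f₂ hf₂
  -- cleanness of G'
  have hclean : ∀ K : DyadicInterval, μ (K.toSet ∩ G') ≠ 0 → ¬ BadP μ N f₁ lam K := by
    intro K hne hbadK
    apply hne
    have hempty : K.toSet ∩ G' = ∅ := by
      apply Set.eq_empty_iff_forall_notMem.2
      intro x hx
      exact hx.2.2 (subset_badSet μ N f₁ hbadK hx.1)
    rw [hempty]
    simp
  -- bound the tsum by bounding all finite subsums
  rw [formC]
  apply tsum_le_of_sum_le' (by positivity)
  intro Fq
  set h : DyadicInterval × DyadicInterval → ℝ := fun p =>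
    avg μ p.1 (fun x => |f₁ x|) * avg μ p.2 (fun x => |f₂ x|) *
      Real.sqrt (mBal μ p.1 * mBal μ p.2) with hh
  set F : Finset (DyadicInterval × DyadicInterval) := Fq.image Subtype.val with hF
  have hsum : ∑ q ∈ Fq, h q.1 = ∑ p ∈ F, h p := by
    rw [hF]
    exact (Finset.sum_image (f := h) (g := Subtype.val)
      (fun a _ b _ hab => Subtype.ext hab)).symm
  have hFprop : ∀ p ∈ F, p.1 ∈ S ∧ p.2 ∈ S ∧
      ∃ s' t' : ℕ, s' ≤ N+2 ∧ t' ≤ N+2 ∧ p.1.ancestor s' = p.2.ancestor t' := by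
    intro p hp
    rw [hF, Finset.mem_image] at hp
    obtain ⟨q, -, rfl⟩ := hp
    obtain ⟨hq1, hq2, -, -, hdd⟩ := q.2
    exact ⟨hq1, hq2, exists_rep_of_ddist_le hdd⟩
  have hkey := key_sum hGood hc hbal hf₁int hf₁norm hη0 hη1 hEmeas hEsub hElow hEdisj
    hG'meas hG'fin hlam hclean hf₂ F hFprop
  have hfinal : (4 * (Pn:ℝ) / η) *
      Real.sqrt ((1 + (Pn:ℝ)) * c^(N+2) * lam * (μ G').toReal)
        ≤ 8 * (Pn:ℝ) * C6 / η := by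
    have hle : (1 + (Pn:ℝ)) * c^(N+2) * lam * (μ G').toReal ≤ 4 * C6^2 := by
      have h1 : (μ G').toReal ≤ tG := by
        rw [htGdef]
        exact ENNReal.toReal_mono hGtop.ne (measure_mono Set.diff_subset)
      have h2 : lam * (μ G').toReal ≤ 4 * C6 := by
        rw [hlamdef]
        rw [div_mul_eq_mul_div, div_le_iff₀ htG]
        have := ENNReal.toReal_nonneg (a := μ G')
        nlinarith
      calc (1 + (Pn:ℝ)) * c^(N+2) * lam * (μ G').toReal
          = C6 * (lam * (μ G').toReal) := by rw [hC6]; ring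
        _ ≤ C6 * (4 * C6) := by
            apply mul_le_mul_of_nonneg_left h2 hC6pos.le
        _ = 4 * C6^2 := by ring
    calc (4 * (Pn:ℝ) / η) * Real.sqrt ((1 + (Pn:ℝ)) * c^(N+2) * lam * (μ G').toReal)
        ≤ (4 * (Pn:ℝ) / η) * Real.sqrt (4 * C6^2) := by
          apply mul_le_mul_of_nonneg_left (Real.sqrt_le_sqrt hle) (by positivity)
      _ = (4 * (Pn:ℝ) / η) * (2 * C6) := by
          rw [show 4 * C6^2 = (2*C6)^2 by ring, Real.sqrt_sq (by positivity)]
      _ = 8 * (Pn:ℝ) * C6 / η := by ring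
  calc ∑ q ∈ Fq, h q.1 = ∑ p ∈ F, h p := hsum
    _ ≤ (4 * (Pn:ℝ) / η) * Real.sqrt ((1 + (Pn:ℝ)) * c^(N+2) * lam * (μ G').toReal) := by
        rw [hPn]
        exact hkey
    _ ≤ 8 * (Pn:ℝ) * C6 / η := hfinal

end
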